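/- arXiv:1910.14503 — 2 statements merged into one kernel-verified Lean document; each statement's English description precedes it below -/
import Mathlib

section
/- Let T be a (d₁,d₂)-biregular tree with d₁,d₂ ≥ 3, let Γ ≤ Aut(T) be a tree lattice, Q = Γ∖T, and fix a base vertex ṽ ∈ VT. Then for every ε > 0 there exists a finite subset K ⊆ VQ such that π_*ρₙ(K) ≥ 1 − ε for all n ∈ ℕ. -/
open Filter Topology MeasureTheory

attribute [local instance] Classical.propDecidable

namespace TreeDyn


variable {V : Type*}

/-- The type of directed edges of a simple graph. -/
def DEdge (T : SimpleGraph V) : Type _ := {p : V × V // T.Adj p.1 p.2}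

/-- `T` is a `(d₁,d₂)`-biregular tree: a tree whose vertex set admits a bipartition such
that every vertex of one class has degree `d₁` and every vertex of the other class has
degree `d₂`. -/
def IsBiregularTree (T : SimpleGraph V) (d₁ d₂ : ℕ) : Prop :=
  T.Connected ∧ T.IsAcyclic ∧
    ∃ c : V → Bool,
      (∀ u v, T.Adj u v → c u ≠ c v) ∧
      (∀ v, c v = true → Nat.card (T.neighborSet v) = d₁) ∧
      (∀ v, c v = false → Nat.card (T.neighborSet v) = d₂)

/-- A permutation of the vertices is an automorphism of `T` acting without edge
inversion if it preserves adjacency and moves every vertex an even distance. -/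
def IsTreeAut (T : SimpleGraph V) (σ : Equiv.Perm V) : Prop :=
  (∀ u v, T.Adj (σ u) (σ v) ↔ T.Adj u v) ∧ ∀ v, Even (T.dist v (σ v))

variable (T : SimpleGraph V) (Λ : Subgroup (Equiv.Perm V))

/-- Two vertices are related if they lie in the same `Λ`-orbit. -/
def vrel (u v : V) : Prop := ∃ γ ∈ Λ, γ u = v

/-- The vertex set of the quotient graph `Q = Λ∖T`. -/
def VQ := Quot (vrel Λ)

/-- Projection of vertices to the quotient graph. -/
def πV : V → VQ Λ := Quot.mk _

/-- Two directed edges are related if they lie in the same `Λ`-orbit. -/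
def erel (e f : DEdge T) : Prop :=
  ∃ γ ∈ Λ, γ e.1.1 = f.1.1 ∧ γ e.1.2 = f.1.2

/-- The directed edge set of the quotient graph `Q = Λ∖T`. -/
def EQ := Quot (erel T Λ)

/-- Projection of directed edges to the quotient graph. -/
def πE : DEdge T → EQ T Λ := Quot.mk _

/-- The initial vertex `∂₀ e` of a quotient edge. -/
noncomputable def tailQ (e : EQ T Λ) : VQ Λ := πV Λ (Quot.out e).1.1

/-- The terminal vertex `∂₁ e` of a quotient edge. -/
noncomputable def headQ (e : EQ T Λ) : VQ Λ := πV Λ (Quot.out e).1.2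

/-- The reversal `ē` of a quotient edge. -/
noncomputable def barQ (e : EQ T Λ) : EQ T Λ :=
  πE T Λ ⟨((Quot.out e).1.2, (Quot.out e).1.1), (Quot.out e).2.symm⟩

/-- The order of the stabilizer of a vertex in `Λ`. -/
noncomputable def stabV (v : V) : ℕ :=
  Nat.card {γ : Λ // (γ : Equiv.Perm V) v = v}

/-- The order of the pointwise stabilizer of a directed edge in `Λ`. -/
noncomputable def stabE (e : DEdge T) : ℕ :=
  Nat.card {γ : Λ // (γ : Equiv.Perm V) e.1.1 = e.1.1 ∧ (γ : Equiv.Perm V) e.1.2 = e.1.2}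

/-- The index map of the edge-indexed graph: `ind e = [Λ_{∂₀ẽ} : Λ_ẽ]` for any lift `ẽ`. -/
noncomputable def indQ (e : EQ T Λ) : ℕ :=
  stabV Λ (Quot.out e).1.1 / stabE T Λ (Quot.out e)

/-- The degree of a vertex of the quotient graph: the degree in `T` of any of its lifts. -/
noncomputable def degQ (v : VQ Λ) : ℕ := Nat.card (T.neighborSet (Quot.out v))

/-- `Δ(e) = ind(ē)/ind(e)`. -/
noncomputable def deltaQ (e : EQ T Λ) : ℝ :=
  (indQ T Λ (barQ T Λ e) : ℝ) / (indQ T Λ e : ℝ)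

/-- `Λ` is a tree lattice: a discrete subgroup (finite vertex stabilizers) of `Aut T`
with finite covolume, i.e. `Σ_{v ∈ VQ} N_o(v)⁻¹ < ∞` where `N_o` is the multiplicative
function along paths determined by `Δ`. -/
def IsTreeLattice : Prop :=
  (∀ γ ∈ Λ, IsTreeAut T γ) ∧
  (∀ v : V, Finite {γ : Λ // (γ : Equiv.Perm V) v = v}) ∧
  ∃ (o : VQ Λ) (N : VQ Λ → ℝ),
    N o = 1 ∧ (∀ v, 0 < N v) ∧
    (∀ e : EQ T Λ, N (headQ T Λ e) = deltaQ T Λ e * N (tailQ T Λ e)) ∧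
    Summable (fun v : VQ Λ => (N v)⁻¹)

/-- The transition kernel of the Markov chain associated to `Λ` on the directed edges
of the quotient graph. -/
noncomputable def kerP (e f : EQ T Λ) : ℝ :=
  if headQ T Λ e = tailQ T Λ f then
    (if f = barQ T Λ e then ((indQ T Λ f : ℝ) - 1) else (indQ T Λ f : ℝ)) /
      ((degQ T Λ (headQ T Λ e) : ℝ) - 1)
  else 0

/-- The `n`-step transition kernel. -/
noncomputable def kerPn : ℕ → EQ T Λ → EQ T Λ → ℝ
  | 0, e, f => if e = f then 1 else 0
  | n + 1, e, f => ∑' g : EQ T Λ, kerPn n e g * kerP T Λ g f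

/-- Adjacency in the quotient graph. -/
def AdjQ (u v : VQ Λ) : Prop :=
  ∃ e : EQ T Λ, tailQ T Λ e = u ∧ headQ T Λ e = v

/-- Graph distance on the quotient graph. -/
noncomputable def distQ (u v : VQ Λ) : ℕ :=
  sInf {n : ℕ | ∃ f : ℕ → VQ Λ, f 0 = u ∧ f n = v ∧ ∀ i < n, AdjQ T Λ (f i) (f (i + 1))}

/-- Distance from a finite set of vertices of the quotient graph. -/
noncomputable def distToF (F : Finset (VQ Λ)) (v : VQ Λ) : ℕ :=
  sInf {n : ℕ | ∃ u ∈ F, distQ T Λ u v = n}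

/-- `F` is a finite part for `Λ`: the complement of `F` in the quotient graph is a
disjoint union of finitely many open Nagao rays. -/
def IsFinitePart (F : Finset (VQ Λ)) : Prop :=
  ∃ (k : ℕ) (ray : Fin k → ℕ → VQ Λ),
    (∀ v : VQ Λ, v ∉ F ↔ ∃ i n, ray i n = v) ∧
    (∀ i n j m, ray i n = ray j m → i = j ∧ n = m) ∧
    (∀ i n, ∃ e : EQ T Λ, tailQ T Λ e = ray i n ∧ headQ T Λ e = ray i (n + 1)) ∧
    (∀ i n, ∀ e f : EQ T Λ, tailQ T Λ e = ray i n → headQ T Λ e = ray i (n + 1) →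
      tailQ T Λ f = ray i n → headQ T Λ f = ray i (n + 1) → e = f) ∧
    (∀ i n, ∀ e : EQ T Λ, tailQ T Λ e = ray i n → headQ T Λ e ∉ F →
      headQ T Λ e = ray i (n + 1) ∨ ∃ m, n = m + 1 ∧ headQ T Λ e = ray i m) ∧
    (∀ i n, ∀ e : EQ T Λ, tailQ T Λ e = ray i n → headQ T Λ e = ray i (n + 1) →
      indQ T Λ e = 1) ∧
    (∀ i n, ∀ e : EQ T Λ, tailQ T Λ e = ray i (n + 1) → headQ T Λ e = ray i n →
      indQ T Λ e = degQ T Λ (ray i n) - 1)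

/-- A tree lattice is geometrically finite if its quotient graph contains a nonempty
finite subgraph whose complement is a disjoint union of finitely many open Nagao rays. -/
def IsGeomFinite : Prop := ∃ F : Finset (VQ Λ), F.Nonempty ∧ IsFinitePart T Λ F

/-- The mass that the projection to `VQ` of the uniform measure on the sphere
`S(vb,n)` gives to the vertex `q` of the quotient graph. -/
noncomputable def sphPush (vb : V) (n : ℕ) (q : VQ Λ) : ℝ :=
  (Nat.card {w : V // T.dist vb w = n ∧ πV Λ w = q} : ℝ) /
    (Nat.card {w : V // T.dist vb w = n} : ℝ)

/-- `ℙ_e(τ = i)` : the probability that the Markov chain started at `e` hits the set of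
edges with terminal vertex in `F` for the first time at time `i`. -/
noncomputable def hitP (F : Finset (VQ Λ)) : ℕ → EQ T Λ → ℝ
  | 0, e => if headQ T Λ e ∈ F then 1 else 0
  | i + 1, e => if headQ T Λ e ∈ F then 0 else ∑' f : EQ T Λ, kerP T Λ e f * hitP F i f

/-- `ℙ_e(τ' = i)` where `τ' = min {n | n ≥ τ, 2 ∣ n}`. -/
noncomputable def hitP' (F : Finset (VQ Λ)) (i : ℕ) (e : EQ T Λ) : ℝ :=
  if 2 ∣ i then hitP T Λ F i e + (if 1 ≤ i then hitP T Λ F (i - 1) e else 0) else 0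

/-- `(Ω₀, Ω₁)` is the pair of cyclic classes of the (period two) kernel `P`. -/
def IsCyclicPair (Ω₀ Ω₁ : Set (EQ T Λ)) : Prop :=
  (∀ e, e ∈ Ω₀ ∨ e ∈ Ω₁) ∧ (∀ e, ¬(e ∈ Ω₀ ∧ e ∈ Ω₁)) ∧
  (∀ e ∈ Ω₀, ∀ f, kerP T Λ e f ≠ 0 → f ∈ Ω₁) ∧
  (∀ e ∈ Ω₁, ∀ f, kerP T Λ e f ≠ 0 → f ∈ Ω₀)

/-- `Ω` is a cyclic class of the kernel `P`. -/
def IsCyclicClass (Ω : Set (EQ T Λ)) : Prop :=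
  ∃ Ω', IsCyclicPair T Λ Ω Ω' ∨ IsCyclicPair T Λ Ω' Ω



/-! ### Auxiliary development -/

section Aux7

open SimpleGraph Function

/-! #### Generic counting lemmas -/

lemma aux_card_eq_sum_fibers {α β : Type*} (f : α → β) [Fintype β]
    (hfib : ∀ b, Finite {a // f a = b}) :
    Nat.card α = ∑ b : β, Nat.card {a // f a = b} := by
  haveI := hfib
  haveI : ∀ b, Fintype {a // f a = b} := fun b => Fintype.ofFinite _
  calc Nat.card α = Nat.card (Σ b : β, {a // f a = b}) :=
        (Nat.card_congr (Equiv.sigmaFiberEquiv f)).symm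
    _ = ∑ b : β, Nat.card {a // f a = b} := by
        simp [Nat.card_eq_fintype_card, Fintype.card_sigma]

lemma aux_finite_of_fibers {α β : Type*} (f : α → β) [Finite β]
    (hfib : ∀ b, Finite {a // f a = b}) : Finite α := by
  haveI := hfib
  exact Finite.of_equiv _ (Equiv.sigmaFiberEquiv f)

lemma aux_card_le_mul {α β : Type*} (f : α → β) [Finite β] (k : ℕ)
    (hfib : ∀ b, Finite {a // f a = b}) (h : ∀ b, Nat.card {a // f a = b} ≤ k) :
    Nat.card α ≤ k * Nat.card β := by
  haveI : Fintype β := Fintype.ofFinite β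
  rw [aux_card_eq_sum_fibers f hfib]
  calc ∑ b : β, Nat.card {a // f a = b} ≤ ∑ _b : β, k :=
        Finset.sum_le_sum (fun b _ => h b)
    _ = k * Nat.card β := by
        simp [Finset.sum_const, Nat.card_eq_fintype_card, mul_comm]

/-! #### Sphere sizes in a biregular tree -/

/-- Size of the sphere of radius `n` about a vertex of degree `a` in a biregular tree in
which the opposite colour class has degree `b`. -/
def cnt (a b : ℕ) : ℕ → ℕ
  | 0 => 1
  | 1 => a
  | n + 2 => cnt a b (n + 1) * ((if Even n then b else a) - 1)

lemma cnt_zero (a b : ℕ) : cnt a b 0 = 1 := rfl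

lemma cnt_one (a b : ℕ) : cnt a b 1 = a := rfl

lemma cnt_step (a b n : ℕ) :
    cnt a b (n + 2) = cnt a b (n + 1) * ((if Even n then b else a) - 1) := by
  rw [cnt]

lemma nat_cases_012 (n : ℕ) : n = 0 ∨ n = 1 ∨ ∃ m, n = m + 2 := by
  rcases n with _ | _ | m
  · exact Or.inl rfl
  · exact Or.inr (Or.inl rfl)
  · exact Or.inr (Or.inr ⟨m, rfl⟩)

lemma cnt_pos {a b : ℕ} (ha : 3 ≤ a) (hb : 3 ≤ b) (n : ℕ) : 1 ≤ cnt a b n := by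
  induction n using Nat.strong_induction_on with
  | _ n ih =>
    obtain hn | hn | ⟨m, hn⟩ := nat_cases_012 n <;> subst hn
    · simp [cnt_zero]
    · rw [cnt_one]; omega
    · have h1 := ih (m + 1) (by omega)
      have h2 : 1 ≤ (if Even m then b else a) - 1 := by split <;> omega
      rw [cnt_step]
      exact Nat.one_le_iff_ne_zero.mpr (Nat.mul_ne_zero (by omega) (by omega))

lemma cnt_two_step (a b : ℕ) (n : ℕ) (hn : 1 ≤ n) :
    cnt a b (n + 2) = cnt a b n * ((a - 1) * (b - 1)) := by
  obtain ⟨m, rfl⟩ : ∃ m, n = m + 1 := ⟨n - 1, by omega⟩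
  rw [show m + 1 + 2 = m + 1 + 2 from rfl, cnt_step a b (m + 1), cnt_step a b m]
  by_cases hm : Even m
  · simp only [hm, if_true, Nat.even_add_one, not_true, if_false]
    ring
  · simp only [hm, if_false, Nat.even_add_one, not_false_iff, if_true]
    ring

lemma cnt_swap_le {a b : ℕ} (ha : 3 ≤ a) (hb : 3 ≤ b) (n : ℕ) :
    cnt a b n ≤ a * b * cnt b a n := by
  induction n using Nat.strong_induction_on with
  | _ n ih =>
    obtain hn | hn | ⟨m, hn⟩ := nat_cases_012 n <;> subst hn
    · rw [cnt_zero, cnt_zero]; nlinarith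
    · rw [cnt_one, cnt_one]
      have h1 : 1 ≤ b * b := Nat.one_le_iff_ne_zero.mpr (by positivity)
      calc a = a * 1 := (Nat.mul_one a).symm
        _ ≤ a * (b * b) := Nat.mul_le_mul_left a h1
        _ = a * b * b := by ring
    · obtain hm | hm | ⟨l, hm⟩ := nat_cases_012 m <;> subst hm
      · -- n = 2
        have h1 : cnt a b 2 = a * (b - 1) := by
          rw [cnt_step, cnt_one]; simp
        have h2 : cnt b a 2 = b * (a - 1) := by
          rw [cnt_step, cnt_one]; simp
        rw [h1, h2]
        have hba : 1 ≤ b * (a - 1) := by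
          have h3 : 1 ≤ a - 1 := by omega
          nlinarith
        calc a * (b - 1) ≤ a * b := Nat.mul_le_mul_left _ (by omega)
          _ = a * b * 1 := by ring
          _ ≤ a * b * (b * (a - 1)) := Nat.mul_le_mul_left _ hba
      · -- n = 3
        have hstep1 : cnt a b 3 = cnt a b 1 * ((a - 1) * (b - 1)) := cnt_two_step a b 1 le_rfl
        have hstep2 : cnt b a 3 = cnt b a 1 * ((b - 1) * (a - 1)) := cnt_two_step b a 1 le_rfl
        have hih := ih 1 (by omega)
        rw [hstep1, hstep2]
        calc cnt a b 1 * ((a - 1) * (b - 1))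
            ≤ a * b * cnt b a 1 * ((a - 1) * (b - 1)) := Nat.mul_le_mul_right _ hih
          _ = a * b * (cnt b a 1 * ((b - 1) * (a - 1))) := by ring
      · -- n = l + 4
        have hstep1 : cnt a b (l + 4) = cnt a b (l + 2) * ((a - 1) * (b - 1)) :=
          cnt_two_step a b (l + 2) (by omega)
        have hstep2 : cnt b a (l + 4) = cnt b a (l + 2) * ((b - 1) * (a - 1)) :=
          cnt_two_step b a (l + 2) (by omega)
        have hih := ih (l + 2) (by omega)
        rw [hstep1, hstep2]
        calc cnt a b (l + 2) * ((a - 1) * (b - 1))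
            ≤ a * b * cnt b a (l + 2) * ((a - 1) * (b - 1)) := Nat.mul_le_mul_right _ hih
          _ = a * b * (cnt b a (l + 2) * ((b - 1) * (a - 1))) := by ring

section TreeGeom

variable {V : Type*} {T : SimpleGraph V}

lemma aux_walk_parity {c : V → Bool} (hcol : ∀ u v, T.Adj u v → c u ≠ c v)
    {u v : V} (p : T.Walk u v) : (c u = c v) ↔ Even p.length := by
  induction p with
  | nil => simp
  | @cons a x w h p ih =>
    have hax := hcol a x h
    simp only [SimpleGraph.Walk.length_cons, Nat.even_add_one, ← ih]
    revert hax
    cases c a <;> cases c x <;> cases c w <;> simp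

lemma aux_dist_parity (hconn : T.Connected) {c : V → Bool}
    (hcol : ∀ u v, T.Adj u v → c u ≠ c v) (u v : V) :
    (c u = c v) ↔ Even (T.dist u v) := by
  obtain ⟨p, hp⟩ := hconn.exists_walk_length_eq_dist u v
  rw [← hp]
  exact aux_walk_parity hcol p

lemma aux_adj_dist (hconn : T.Connected) {c : V → Bool}
    (hcol : ∀ u v, T.Adj u v → c u ≠ c v) {u w : V} (h : T.Adj u w) (v : V) :
    T.dist v w = T.dist v u + 1 ∨ T.dist v u = T.dist v w + 1 := by
  have h1 : T.dist v w ≤ T.dist v u + 1 := by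
    have ht := hconn.dist_triangle (u := v) (v := u) (w := w)
    rwa [SimpleGraph.dist_eq_one_iff_adj.mpr h] at ht
  have h2 : T.dist v u ≤ T.dist v w + 1 := by
    have ht := hconn.dist_triangle (u := v) (v := w) (w := u)
    rwa [SimpleGraph.dist_eq_one_iff_adj.mpr h.symm] at ht
  have hne : T.dist v u ≠ T.dist v w := by
    intro he
    have p1 := aux_dist_parity hconn hcol v u
    have p2 := aux_dist_parity hconn hcol v w
    rw [he] at p1
    have hcc : c u = c w := by
      have h3 := p1.trans p2.symm
      revert h3
      cases c v <;> cases c u <;> cases c w <;> simp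
    exact hcol u w h hcc
  omega

lemma aux_exists_pred (hconn : T.Connected) {v w : V} {n : ℕ}
    (h : T.dist v w = n + 1) : ∃ u, T.Adj w u ∧ T.dist v u = n := by
  have hne : w ≠ v := by
    intro he
    subst he
    simp [SimpleGraph.dist_self] at h
  obtain ⟨p, hp⟩ := hconn.exists_walk_length_eq_dist w v
  obtain ⟨u, hadj, q, hq⟩ := SimpleGraph.Walk.exists_eq_cons_of_ne hne p
  refine ⟨u, hadj, ?_⟩
  have hql : q.length = n := by
    have hpl : p.length = n + 1 := by rw [hp, SimpleGraph.dist_comm]; exact h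
    rw [hq] at hpl
    simpa using hpl
  have hle : T.dist v u ≤ n := by
    have hd := SimpleGraph.dist_le q.reverse
    rwa [SimpleGraph.Walk.length_reverse, hql] at hd
  have hge : n ≤ T.dist v u := by
    have ht := hconn.dist_triangle (u := v) (v := u) (w := w)
    rw [SimpleGraph.dist_eq_one_iff_adj.mpr hadj.symm] at ht
    omega
  omega

lemma aux_pred_unique (hconn : T.Connected) (hac : T.IsAcyclic) {v w : V} {n : ℕ}
    (h : T.dist v w = n + 1) {u₁ u₂ : V}
    (ha₁ : T.Adj w u₁) (hd₁ : T.dist v u₁ = n)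
    (ha₂ : T.Adj w u₂) (hd₂ : T.dist v u₂ = n) : u₁ = u₂ := by
  obtain ⟨p₁, hp₁⟩ := hconn.exists_walk_length_eq_dist v u₁
  obtain ⟨p₂, hp₂⟩ := hconn.exists_walk_length_eq_dist v u₂
  have hl₁ : (p₁.concat ha₁.symm).length = n + 1 := by
    rw [SimpleGraph.Walk.length_concat, hp₁, hd₁]
  have hl₂ : (p₂.concat ha₂.symm).length = n + 1 := by
    rw [SimpleGraph.Walk.length_concat, hp₂, hd₂]
  have hq₁ : (p₁.concat ha₁.symm).IsPath :=
    SimpleGraph.Walk.isPath_of_length_eq_dist _ (by rw [hl₁, h])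
  have hq₂ : (p₂.concat ha₂.symm).IsPath :=
    SimpleGraph.Walk.isPath_of_length_eq_dist _ (by rw [hl₂, h])
  have hpq := hac.path_unique ⟨p₁.concat ha₁.symm, hq₁⟩ ⟨p₂.concat ha₂.symm, hq₂⟩
  have heq : p₁.concat ha₁.symm = p₂.concat ha₂.symm := congrArg Subtype.val hpq
  obtain ⟨hv, -⟩ := SimpleGraph.Walk.concat_inj heq
  exact hv

lemma aux_upn_card (hconn : T.Connected) (hac : T.IsAcyclic) {c : V → Bool}
    (hcol : ∀ u v, T.Adj u v → c u ≠ c v)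
    {v w : V} {n : ℕ} (h : T.dist v w = n + 1)
    (hnb : (T.neighborSet w).Finite) :
    Nat.card {u // T.Adj w u ∧ T.dist v u = n + 2} = Nat.card (T.neighborSet w) - 1 := by
  obtain ⟨p, hpa, hpd⟩ := aux_exists_pred hconn h
  have hiff : ∀ u : V, (T.Adj w u ∧ T.dist v u = n + 2) ↔ (u ∈ T.neighborSet w \ {p}) := by
    intro u
    simp only [Set.mem_diff, SimpleGraph.mem_neighborSet, Set.mem_singleton_iff]
    constructor
    · rintro ⟨hadj, hd⟩
      refine ⟨hadj, ?_⟩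
      intro he
      subst he
      omega
    · rintro ⟨hadj, hne2⟩
      refine ⟨hadj, ?_⟩
      rcases aux_adj_dist hconn hcol hadj.symm v with hc | hc
      · exact absurd (aux_pred_unique hconn hac h hadj (by omega) hpa hpd) hne2
      · omega
  have hcongr : Nat.card {u // T.Adj w u ∧ T.dist v u = n + 2}
      = Nat.card (↥(T.neighborSet w \ {p})) :=
    Nat.card_congr (Equiv.subtypeEquivRight hiff)
  rw [hcongr, Nat.card_coe_set_eq, Nat.card_coe_set_eq,
    Set.ncard_diff_singleton_of_mem ((SimpleGraph.mem_neighborSet T w p).mpr hpa)]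

def aux_sphere_zero_unique (hconn : T.Connected) (v : V) :
    Unique {x // T.dist v x = 0} := by
  refine ⟨⟨⟨v, by simp⟩⟩, ?_⟩
  rintro ⟨x, hx⟩
  have hvx : v = x := (hconn.dist_eq_zero_iff).mp hx
  subst hvx
  rfl

def aux_sphere_one_equiv (v : V) :
    {x // T.dist v x = 1} ≃ ↥(T.neighborSet v) :=
  Equiv.subtypeEquivRight (fun x => by
    rw [SimpleGraph.mem_neighborSet, ← SimpleGraph.dist_eq_one_iff_adj])

lemma aux_sphere_step (hconn : T.Connected) (hac : T.IsAcyclic) {c : V → Bool}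
    (hcol : ∀ u v, T.Adj u v → c u ≠ c v)
    (hnb : ∀ w : V, (T.neighborSet w).Finite)
    {v : V} {n : ℕ} (hfin : Finite {x // T.dist v x = n + 1}) (k : ℕ)
    (hk : ∀ w, T.dist v w = n + 1 → Nat.card (T.neighborSet w) = k) :
    Finite {x // T.dist v x = n + 2} ∧
      Nat.card {x // T.dist v x = n + 2}
        = Nat.card {x // T.dist v x = n + 1} * (k - 1) := by
  have hex : ∀ x : {x // T.dist v x = n + 2}, ∃ u, T.Adj x.1 u ∧ T.dist v u = n + 1 :=
    fun x => aux_exists_pred hconn x.2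
  choose F hFadj hFdist using hex
  set G : {x // T.dist v x = n + 2} → {w // T.dist v w = n + 1} :=
    fun x => ⟨F x, hFdist x⟩ with hG
  have fibequiv : ∀ w : {w // T.dist v w = n + 1},
      {x // G x = w} ≃ {u // T.Adj w.1 u ∧ T.dist v u = n + 2} := by
    intro w
    refine ⟨fun x => ⟨x.1.1, ?_, x.1.2⟩, fun u => ⟨⟨u.1, u.2.2⟩, ?_⟩, ?_, ?_⟩
    · have h1 : F x.1 = w.1 := congrArg Subtype.val x.2
      have h2 := hFadj x.1
      rw [h1] at h2
      exact h2.symm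
    · have hd : T.dist v u.1 = (n + 1) + 1 := u.2.2
      have h1 : F ⟨u.1, u.2.2⟩ = w.1 :=
        aux_pred_unique hconn hac hd (hFadj ⟨u.1, u.2.2⟩) (hFdist ⟨u.1, u.2.2⟩)
          u.2.1.symm w.2
      exact Subtype.ext h1
    · rintro ⟨⟨x, hx⟩, hgx⟩
      rfl
    · rintro ⟨u, hu⟩
      rfl
  have hupfin : ∀ w : {w // T.dist v w = n + 1},
      Finite {u // T.Adj w.1 u ∧ T.dist v u = n + 2} := by
    intro w
    haveI : Finite ↥(T.neighborSet w.1) := (hnb w.1).to_subtype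
    exact Finite.of_injective
      (fun u => (⟨u.1, (SimpleGraph.mem_neighborSet T w.1 u.1).mpr u.2.1⟩ :
        ↥(T.neighborSet w.1)))
      (fun x y hxy => by
        apply Subtype.ext
        injection hxy)
  have hfibfin : ∀ w, Finite {x // G x = w} :=
    fun w => Finite.of_equiv _ (fibequiv w).symm
  constructor
  · exact aux_finite_of_fibers G hfibfin
  · haveI : Fintype {w // T.dist v w = n + 1} := Fintype.ofFinite _
    rw [aux_card_eq_sum_fibers G hfibfin]
    have hcard : ∀ w : {w // T.dist v w = n + 1}, Nat.card {x // G x = w} = k - 1 := by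
      intro w
      rw [Nat.card_congr (fibequiv w), aux_upn_card hconn hac hcol w.2 (hnb w.1),
        hk w.1 w.2]
    calc ∑ w : {w // T.dist v w = n + 1}, Nat.card {x // G x = w}
        = ∑ _w : {w // T.dist v w = n + 1}, (k - 1) :=
          Finset.sum_congr rfl (fun w _ => hcard w)
      _ = Nat.card {x // T.dist v x = n + 1} * (k - 1) := by
          simp [Finset.sum_const, Nat.card_eq_fintype_card]

lemma aux_sphere_card (hconn : T.Connected) (hac : T.IsAcyclic) {c : V → Bool}
    (hcol : ∀ u v, T.Adj u v → c u ≠ c v) {d₁ d₂ : ℕ}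
    (hdeg : ∀ w : V, Nat.card (T.neighborSet w) = (if c w then d₁ else d₂))
    (hnb : ∀ w : V, (T.neighborSet w).Finite)
    (v : V) : ∀ n : ℕ,
      Finite {x // T.dist v x = n} ∧
      Nat.card {x // T.dist v x = n}
        = cnt (if c v then d₁ else d₂) (if c v then d₂ else d₁) n := by
  intro n
  induction n using Nat.strong_induction_on with
  | _ n ih =>
    obtain hn | hn | ⟨m, hn⟩ := nat_cases_012 n <;> subst hn
    · haveI := aux_sphere_zero_unique hconn v
      exact ⟨inferInstance, by rw [Nat.card_unique, cnt_zero]⟩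
    · constructor
      · haveI : Finite ↥(T.neighborSet v) := (hnb v).to_subtype
        exact Finite.of_equiv _ (aux_sphere_one_equiv v).symm
      · rw [Nat.card_congr (aux_sphere_one_equiv (T := T) v), hdeg v, cnt_one]
    · obtain ⟨hfin, hcard⟩ := ih (m + 1) (by omega)
      set k : ℕ := if Even (m + 1) then (if c v then d₁ else d₂) else (if c v then d₂ else d₁)
        with hkdef
      have hk : ∀ w, T.dist v w = m + 1 → Nat.card (T.neighborSet w) = k := by
        intro w hw
        have hpar := aux_dist_parity hconn hcol v w
        rw [hw] at hpar
        rw [hdeg w, hkdef]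
        by_cases he : Even (m + 1)
        · have hcc : c v = c w := hpar.mpr he
          rw [← hcc, if_pos he]
        · have hcc : ¬ (c v = c w) := fun hcc => he (hpar.mp hcc)
          rw [if_neg he]
          revert hcc
          cases c v <;> cases c w <;> simp
      obtain ⟨hfin2, hcard2⟩ := aux_sphere_step hconn hac hcol hnb hfin k hk
      refine ⟨hfin2, ?_⟩
      rw [hcard2, hcard, cnt_step]
      congr 2
      rw [hkdef]
      by_cases he : Even m
      · simp [he, Nat.even_add_one]
      · simp [he, Nat.even_add_one]

end TreeGeom

/-! #### Quotient and stabilizer lemmas -/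

section GroupAux

variable {V : Type*}

lemma aux_vrel_equivalence (Λ : Subgroup (Equiv.Perm V)) : Equivalence (vrel Λ) := by
  constructor
  · exact fun v => ⟨1, Λ.one_mem, rfl⟩
  · rintro u v ⟨γ, hγ, rfl⟩
    exact ⟨γ⁻¹, Λ.inv_mem hγ, γ.symm_apply_apply u⟩
  · rintro u v w ⟨γ, hγ, rfl⟩ ⟨δ, hδ, rfl⟩
    exact ⟨δ * γ, Λ.mul_mem hδ hγ, rfl⟩

lemma aux_piV_eq_iff (Λ : Subgroup (Equiv.Perm V)) {u v : V} :
    πV Λ u = πV Λ v ↔ vrel Λ u v :=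
  ⟨fun h => ((aux_vrel_equivalence Λ).eqvGen_iff).mp (Quot.eqvGen_exact h),
   fun h => Quot.sound h⟩

lemma aux_erel_equivalence (T : SimpleGraph V) (Λ : Subgroup (Equiv.Perm V)) :
    Equivalence (erel T Λ) := by
  constructor
  · exact fun e => ⟨1, Λ.one_mem, rfl, rfl⟩
  · rintro e f ⟨γ, hγ, h1, h2⟩
    exact ⟨γ⁻¹, Λ.inv_mem hγ, by rw [← h1]; exact γ.symm_apply_apply _,
      by rw [← h2]; exact γ.symm_apply_apply _⟩
  · rintro e f g ⟨γ, hγ, h1, h2⟩ ⟨δ, hδ, h3, h4⟩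
    exact ⟨δ * γ, Λ.mul_mem hδ hγ, by rw [Equiv.Perm.mul_apply, h1, h3],
      by rw [Equiv.Perm.mul_apply, h2, h4]⟩

lemma aux_piE_eq_iff (T : SimpleGraph V) (Λ : Subgroup (Equiv.Perm V)) {e f : DEdge T} :
    πE T Λ e = πE T Λ f ↔ erel T Λ e f :=
  ⟨fun h => ((aux_erel_equivalence T Λ).eqvGen_iff).mp (Quot.eqvGen_exact h),
   fun h => Quot.sound h⟩

lemma aux_out_vrel (Λ : Subgroup (Equiv.Perm V)) (q : VQ Λ) : πV Λ (Quot.out q) = q :=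
  Quot.out_eq q

lemma aux_out_erel (T : SimpleGraph V) (Λ : Subgroup (Equiv.Perm V)) (e : DEdge T) :
    erel T Λ e (Quot.out (πE T Λ e)) := by
  rw [← aux_piE_eq_iff]
  exact (Quot.out_eq (πE T Λ e)).symm

/-- The stabilizer of a vertex as a subgroup of `Λ`. -/
def stabSub (Λ : Subgroup (Equiv.Perm V)) (v : V) : Subgroup Λ where
  carrier := {γ : Λ | (γ : Equiv.Perm V) v = v}
  one_mem' := rfl
  mul_mem' := by
    intro a b ha hb
    simp only [Set.mem_setOf_eq] at *
    rw [Subgroup.coe_mul, Equiv.Perm.mul_apply, hb, ha]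
  inv_mem' := by
    intro a ha
    simp only [Set.mem_setOf_eq] at *
    rw [Subgroup.coe_inv]
    calc (↑a : Equiv.Perm V)⁻¹ v = (↑a : Equiv.Perm V)⁻¹ ((↑a : Equiv.Perm V) v) := by
          rw [ha]
      _ = v := Equiv.symm_apply_apply _ _

lemma mem_stabSub {Λ : Subgroup (Equiv.Perm V)} {v : V} {γ : Λ} :
    γ ∈ stabSub Λ v ↔ (γ : Equiv.Perm V) v = v := Iff.rfl

lemma aux_stabV_eq (Λ : Subgroup (Equiv.Perm V)) (v : V) :
    stabV Λ v = Nat.card (stabSub Λ v) := rfl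

lemma aux_stabE_eq_inf (T : SimpleGraph V) (Λ : Subgroup (Equiv.Perm V)) (e : DEdge T) :
    stabE T Λ e = Nat.card ((stabSub Λ e.1.1) ⊓ (stabSub Λ e.1.2) : Subgroup Λ) := by
  apply Nat.card_congr
  exact Equiv.subtypeEquivRight (fun γ => by
    rw [Subgroup.mem_inf, mem_stabSub, mem_stabSub])

lemma aux_stabE_dvd_fst (T : SimpleGraph V) (Λ : Subgroup (Equiv.Perm V)) (e : DEdge T) :
    stabE T Λ e ∣ stabV Λ e.1.1 := by
  rw [aux_stabE_eq_inf, aux_stabV_eq]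
  exact Subgroup.card_dvd_of_le inf_le_left

lemma aux_stabE_dvd_snd (T : SimpleGraph V) (Λ : Subgroup (Equiv.Perm V)) (e : DEdge T) :
    stabE T Λ e ∣ stabV Λ e.1.2 := by
  rw [aux_stabE_eq_inf, aux_stabV_eq]
  exact Subgroup.card_dvd_of_le inf_le_right

lemma aux_stabV_pos (Λ : Subgroup (Equiv.Perm V))
    (hfin : ∀ v : V, Finite {γ : Λ // (γ : Equiv.Perm V) v = v}) (v : V) :
    0 < stabV Λ v := by
  haveI := hfin v
  haveI : Nonempty {γ : Λ // (γ : Equiv.Perm V) v = v} := ⟨⟨1, rfl⟩⟩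
  exact Nat.card_pos

lemma aux_stabE_finite {T : SimpleGraph V} (Λ : Subgroup (Equiv.Perm V))
    (hfin : ∀ v : V, Finite {γ : Λ // (γ : Equiv.Perm V) v = v}) (e : DEdge T) :
    Finite {γ : Λ // (γ : Equiv.Perm V) e.1.1 = e.1.1 ∧ (γ : Equiv.Perm V) e.1.2 = e.1.2} := by
  haveI := hfin e.1.1
  exact Finite.of_injective
    (fun γ => (⟨γ.1, γ.2.1⟩ : {γ : Λ // (γ : Equiv.Perm V) e.1.1 = e.1.1}))
    (fun x y hxy => by
      apply Subtype.ext
      injection hxy)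

lemma aux_stabE_pos (T : SimpleGraph V) (Λ : Subgroup (Equiv.Perm V))
    (hfin : ∀ v : V, Finite {γ : Λ // (γ : Equiv.Perm V) v = v}) (e : DEdge T) :
    0 < stabE T Λ e := by
  haveI := aux_stabE_finite Λ hfin e
  haveI : Nonempty
      {γ : Λ // (γ : Equiv.Perm V) e.1.1 = e.1.1 ∧ (γ : Equiv.Perm V) e.1.2 = e.1.2} :=
    ⟨⟨1, rfl, rfl⟩⟩
  exact Nat.card_pos

lemma aux_conj_fix_iff {σ γ : Equiv.Perm V} {u u' : V} (h : σ u = u') :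
    ((σ * γ * σ⁻¹) u' = u') ↔ (γ u = u) := by
  subst h
  rw [Equiv.Perm.mul_apply, Equiv.Perm.mul_apply, Equiv.Perm.coe_inv, Equiv.symm_apply_apply,
    Equiv.apply_eq_iff_eq]

lemma aux_stabV_congr (Λ : Subgroup (Equiv.Perm V)) {σ : Equiv.Perm V} (hσ : σ ∈ Λ)
    {u u' : V} (h : σ u = u') : stabV Λ u = stabV Λ u' := by
  apply Nat.card_congr
  refine Equiv.subtypeEquiv (MulAut.conj (⟨σ, hσ⟩ : Λ)).toEquiv (fun γ => ?_)
  have hc : ((MulAut.conj (⟨σ, hσ⟩ : Λ) γ : Λ) : Equiv.Perm V) = σ * ↑γ * σ⁻¹ := by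
    simp [MulAut.conj_apply]
  constructor
  · intro hg
    show ((MulAut.conj (⟨σ, hσ⟩ : Λ) γ : Λ) : Equiv.Perm V) u' = u'
    rw [hc]
    exact (aux_conj_fix_iff h).mpr hg
  · intro hg
    have hg' : ((MulAut.conj (⟨σ, hσ⟩ : Λ) γ : Λ) : Equiv.Perm V) u' = u' := hg
    rw [hc] at hg'
    exact (aux_conj_fix_iff h).mp hg'

lemma aux_stabE_congr (T : SimpleGraph V) (Λ : Subgroup (Equiv.Perm V))
    {σ : Equiv.Perm V} (hσ : σ ∈ Λ) {e f : DEdge T}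
    (h1 : σ e.1.1 = f.1.1) (h2 : σ e.1.2 = f.1.2) : stabE T Λ e = stabE T Λ f := by
  apply Nat.card_congr
  refine Equiv.subtypeEquiv (MulAut.conj (⟨σ, hσ⟩ : Λ)).toEquiv (fun γ => ?_)
  have hc : ((MulAut.conj (⟨σ, hσ⟩ : Λ) γ : Λ) : Equiv.Perm V) = σ * ↑γ * σ⁻¹ := by
    simp [MulAut.conj_apply]
  constructor
  · rintro ⟨hg1, hg2⟩
    constructor
    · show ((MulAut.conj (⟨σ, hσ⟩ : Λ) γ : Λ) : Equiv.Perm V) f.1.1 = f.1.1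
      rw [hc]
      exact (aux_conj_fix_iff h1).mpr hg1
    · show ((MulAut.conj (⟨σ, hσ⟩ : Λ) γ : Λ) : Equiv.Perm V) f.1.2 = f.1.2
      rw [hc]
      exact (aux_conj_fix_iff h2).mpr hg2
  · rintro ⟨hg1, hg2⟩
    have hg1' : ((MulAut.conj (⟨σ, hσ⟩ : Λ) γ : Λ) : Equiv.Perm V) f.1.1 = f.1.1 := hg1
    have hg2' : ((MulAut.conj (⟨σ, hσ⟩ : Λ) γ : Λ) : Equiv.Perm V) f.1.2 = f.1.2 := hg2
    rw [hc] at hg1' hg2'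
    exact ⟨(aux_conj_fix_iff h1).mp hg1', (aux_conj_fix_iff h2).mp hg2'⟩

lemma aux_stabE_rev (T : SimpleGraph V) (Λ : Subgroup (Equiv.Perm V)) {x y : V}
    (h : T.Adj x y) :
    stabE T Λ ⟨(y, x), h.symm⟩ = stabE T Λ ⟨(x, y), h⟩ :=
  Nat.card_congr (Equiv.subtypeEquivRight (fun γ => and_comm))

lemma aux_aut_dist_le {T : SimpleGraph V} (hconn : T.Connected) {σ : Equiv.Perm V}
    (hσ : ∀ u v, T.Adj (σ u) (σ v) ↔ T.Adj u v) (u v : V) :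
    T.dist (σ u) (σ v) ≤ T.dist u v := by
  obtain ⟨p, hp⟩ := hconn.exists_walk_length_eq_dist u v
  let f : T →g T := ⟨σ, fun {a b} h => (hσ a b).mpr h⟩
  have hd := SimpleGraph.dist_le (p.map f)
  rwa [SimpleGraph.Walk.length_map, hp] at hd

lemma aux_aut_dist {T : SimpleGraph V} (hconn : T.Connected) {σ : Equiv.Perm V}
    (hσ : ∀ u v, T.Adj (σ u) (σ v) ↔ T.Adj u v) (u v : V) :
    T.dist (σ u) (σ v) = T.dist u v := by
  refine le_antisymm (aux_aut_dist_le hconn hσ u v) ?_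
  have hσ' : ∀ a b, T.Adj (σ⁻¹ a) (σ⁻¹ b) ↔ T.Adj a b := by
    intro a b
    rw [← hσ (σ⁻¹ a) (σ⁻¹ b), Equiv.Perm.coe_inv, Equiv.apply_symm_apply, Equiv.apply_symm_apply]
  have hd := aux_aut_dist_le hconn hσ' (σ u) (σ v)
  rwa [Equiv.Perm.coe_inv, Equiv.symm_apply_apply, Equiv.symm_apply_apply] at hd

lemma aux_deltaQ_eval {T : SimpleGraph V} (Λ : Subgroup (Equiv.Perm V))
    (hfin : ∀ v : V, Finite {γ : Λ // (γ : Equiv.Perm V) v = v}) (ε : EQ T Λ) :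
    deltaQ T Λ ε = (stabV Λ (Quot.out ε).1.2 : ℝ) / (stabV Λ (Quot.out ε).1.1 : ℝ) := by
  obtain ⟨γ, hγ, h1, h2⟩ :=
    aux_out_erel T Λ ⟨((Quot.out ε).1.2, (Quot.out ε).1.1), (Quot.out ε).2.symm⟩
  have hbar : barQ T Λ ε
      = πE T Λ ⟨((Quot.out ε).1.2, (Quot.out ε).1.1), (Quot.out ε).2.symm⟩ := rfl
  unfold deltaQ indQ
  rw [hbar]
  have hV : stabV Λ (Quot.out (πE T Λ
        ⟨((Quot.out ε).1.2, (Quot.out ε).1.1), (Quot.out ε).2.symm⟩)).1.1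
      = stabV Λ (Quot.out ε).1.2 :=
    (aux_stabV_congr Λ hγ h1).symm
  have hE : stabE T Λ (Quot.out (πE T Λ
        ⟨((Quot.out ε).1.2, (Quot.out ε).1.1), (Quot.out ε).2.symm⟩))
      = stabE T Λ (Quot.out ε) := by
    rw [← aux_stabE_congr T Λ hγ h1 h2]
    exact aux_stabE_rev T Λ (Quot.out ε).2
  rw [hV, hE]
  have hdx : stabE T Λ (Quot.out ε) ∣ stabV Λ (Quot.out ε).1.1 :=
    aux_stabE_dvd_fst T Λ (Quot.out ε)
  have hdy : stabE T Λ (Quot.out ε) ∣ stabV Λ (Quot.out ε).1.2 :=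
    aux_stabE_dvd_snd T Λ (Quot.out ε)
  have hs : (0 : ℝ) < (stabE T Λ (Quot.out ε) : ℝ) := by
    exact_mod_cast aux_stabE_pos T Λ hfin (Quot.out ε)
  have hx : (0 : ℝ) < (stabV Λ (Quot.out ε).1.1 : ℝ) := by
    exact_mod_cast aux_stabV_pos Λ hfin (Quot.out ε).1.1
  rw [Nat.cast_div hdy hs.ne', Nat.cast_div hdx hs.ne']
  rw [div_div_div_cancel_right₀]
  exact hs.ne'

end GroupAux

end Aux7

/-- Theorem D(1). Non-escape of mass for spheres: for a tree lattice,
for every `ε > 0` there is a finite set `K ⊆ VQ` with `π_*ρₙ(K) ≥ 1 - ε` for all `n`. -/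
theorem spheres_non_escape_of_mass {V : Type*} (T : SimpleGraph V)
    (d₁ d₂ : ℕ) (hd₁ : 3 ≤ d₁) (hd₂ : 3 ≤ d₂) (hT : IsBiregularTree T d₁ d₂)
    (Λ : Subgroup (Equiv.Perm V)) (hΛ : IsTreeLattice T Λ) (vb : V) :
    ∀ ε : ℝ, 0 < ε → ∃ K : Finset (VQ Λ),
      ∀ n : ℕ, 1 - ε ≤ ∑ q ∈ K, sphPush T Λ vb n q := by
  intro ε hε
  classical
  obtain ⟨hconn, hac, c, hcol, hdeg₁, hdeg₂⟩ := hT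
  obtain ⟨haut, hfin, o, N, hNo, hNpos, hNedge, hsum⟩ := hΛ
  -- basic degree facts
  have hdeg : ∀ w : V, Nat.card (T.neighborSet w) = (if c w then d₁ else d₂) := by
    intro w
    cases hcw : c w
    · simpa using hdeg₂ w hcw
    · simpa using hdeg₁ w hcw
  have hnb : ∀ w : V, (T.neighborSet w).Finite := by
    intro w
    rw [← Set.finite_coe_iff]
    apply Nat.finite_of_card_ne_zero
    rw [hdeg w]
    split <;> omega
  have hsc := fun (v : V) (n : ℕ) => aux_sphere_card hconn hac hcol hdeg hnb v n
  set a : V → ℕ := fun v => if c v then d₁ else d₂ with ha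
  set b : V → ℕ := fun v => if c v then d₂ else d₁ with hb
  have ha3 : ∀ v, 3 ≤ a v := fun v => by rw [ha]; dsimp only; split <;> omega
  have hb3 : ∀ v, 3 ≤ b v := fun v => by rw [hb]; dsimp only; split <;> omega
  have hscfin : ∀ (v : V) (n : ℕ), Finite {x // T.dist v x = n} := fun v n => (hsc v n).1
  have hsceq : ∀ (v : V) (n : ℕ),
      Nat.card {x // T.dist v x = n} = cnt (a v) (b v) n := fun v n => (hsc v n).2
  have hscpos : ∀ (v : V) (n : ℕ), 1 ≤ cnt (a v) (b v) n :=
    fun v n => cnt_pos (ha3 v) (hb3 v) n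
  have hsccomp : ∀ (u w : V) (n : ℕ),
      cnt (a u) (b u) n ≤ d₁ * d₂ * cnt (a w) (b w) n := by
    intro u w n
    by_cases hcc : c u = c w
    · have hau : a u = a w := by rw [ha]; dsimp only; rw [hcc]
      have hbu : b u = b w := by rw [hb]; dsimp only; rw [hcc]
      rw [hau, hbu]
      calc cnt (a w) (b w) n = 1 * cnt (a w) (b w) n := (one_mul _).symm
        _ ≤ d₁ * d₂ * cnt (a w) (b w) n :=
            Nat.mul_le_mul_right _ (by nlinarith)
    · have hau : a u = b w := by
        rw [ha, hb]; dsimp only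
        revert hcc; cases c u <;> cases c w <;> simp
      have hbu : b u = a w := by
        rw [ha, hb]; dsimp only
        revert hcc; cases c u <;> cases c w <;> simp
      rw [hau, hbu]
      have hswap := cnt_swap_le (hb3 w) (ha3 w) n
      have hmul : b w * a w ≤ d₁ * d₂ := by
        rw [ha, hb]; dsimp only
        cases hcw : c w
        · simp [hcw]
        · simp [hcw, Nat.mul_comm]
      calc cnt (b w) (a w) n ≤ b w * a w * cnt (a w) (b w) n := hswap
        _ ≤ d₁ * d₂ * cnt (a w) (b w) n := Nat.mul_le_mul_right _ hmul
  -- stabilizers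
  have hstabpos : ∀ v : V, 0 < stabV Λ v := aux_stabV_pos Λ hfin
  -- identification of the function N
  have hadjR : ∀ u w : V, T.Adj u w →
      N (πV Λ u) / (stabV Λ u : ℝ) = N (πV Λ w) / (stabV Λ w : ℝ) := by
    intro u w h
    obtain ⟨γ, hγ, h1, h2⟩ := aux_out_erel T Λ ⟨(u, w), h⟩
    have hNe := hNedge (πE T Λ ⟨(u, w), h⟩)
    rw [aux_deltaQ_eval Λ hfin] at hNe
    have ht : tailQ T Λ (πE T Λ ⟨(u, w), h⟩) = πV Λ u := by
      unfold tailQ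
      exact ((aux_piV_eq_iff Λ).mpr ⟨γ, hγ, h1⟩).symm
    have hh : headQ T Λ (πE T Λ ⟨(u, w), h⟩) = πV Λ w := by
      unfold headQ
      exact ((aux_piV_eq_iff Λ).mpr ⟨γ, hγ, h2⟩).symm
    rw [ht, hh] at hNe
    have hsx : stabV Λ (Quot.out (πE T Λ ⟨(u, w), h⟩)).1.1 = stabV Λ u :=
      (aux_stabV_congr Λ hγ h1).symm
    have hsy : stabV Λ (Quot.out (πE T Λ ⟨(u, w), h⟩)).1.2 = stabV Λ w :=
      (aux_stabV_congr Λ hγ h2).symm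
    rw [hsx, hsy] at hNe
    have hu0 : (stabV Λ u : ℝ) ≠ 0 := by
      exact_mod_cast (hstabpos u).ne'
    have hw0 : (stabV Λ w : ℝ) ≠ 0 := by
      exact_mod_cast (hstabpos w).ne'
    rw [hNe]
    field_simp
  have hwalkR : ∀ (u w : V) (p : T.Walk u w),
      N (πV Λ u) / (stabV Λ u : ℝ) = N (πV Λ w) / (stabV Λ w : ℝ) := by
    intro u w p
    induction p with
    | nil => rfl
    | cons h p ih => exact (hadjR _ _ h).trans ih
  have hNval : ∀ q : VQ Λ, N q = (stabV Λ (Quot.out q) : ℝ) / (stabV Λ (Quot.out o) : ℝ) := by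
    intro q
    obtain ⟨p⟩ := hconn.preconnected (Quot.out q) (Quot.out o)
    have h := hwalkR _ _ p
    rw [aux_out_vrel Λ q, aux_out_vrel Λ o, hNo] at h
    have hx : (stabV Λ (Quot.out q) : ℝ) ≠ 0 := by
      exact_mod_cast (hstabpos _).ne'
    have hy : (stabV Λ (Quot.out o) : ℝ) ≠ 0 := by
      exact_mod_cast (hstabpos _).ne'
    rw [div_eq_div_iff hx hy] at h
    rw [eq_div_iff hy]
    rw [one_mul] at h
    exact h
  -- the key counting estimate
  have hfiber : ∀ (n : ℕ) (q : VQ Λ),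
      Nat.card {w : V // T.dist vb w = n ∧ πV Λ w = q} * stabV Λ (Quot.out q)
        ≤ stabV Λ vb * cnt (a (Quot.out q)) (b (Quot.out q)) n := by
    intro n q
    haveI hSfin : Finite {x // T.dist (Quot.out q) x = n} := hscfin _ n
    set A := {γ : Λ // T.dist vb ((γ : Equiv.Perm V) (Quot.out q)) = n} with hA
    have hψd : ∀ γ : A, T.dist (Quot.out q) (((γ.1 : Equiv.Perm V))⁻¹ vb) = n := by
      intro γ
      have hiso := aux_aut_dist hconn (haut γ.1.1 γ.1.2).1
        (((γ.1 : Equiv.Perm V))⁻¹ vb) (Quot.out q)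
      rw [show ((γ.1 : Equiv.Perm V)) (((γ.1 : Equiv.Perm V))⁻¹ vb) = vb from
        Equiv.apply_symm_apply _ _] at hiso
      rw [SimpleGraph.dist_comm, ← hiso]
      exact γ.2
    set ψ : A → {x // T.dist (Quot.out q) x = n} :=
      fun γ => ⟨((γ.1 : Equiv.Perm V))⁻¹ vb, hψd γ⟩ with hψ
    have hfibA : ∀ x : {x // T.dist (Quot.out q) x = n},
        Finite {γ : A // ψ γ = x} ∧ Nat.card {γ : A // ψ γ = x} ≤ stabV Λ vb := by
      intro x
      by_cases hne : Nonempty {γ : A // ψ γ = x}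
      · obtain ⟨⟨g₁, hg₁⟩⟩ := hne
        have hg₁v : ((g₁.1 : Equiv.Perm V))⁻¹ vb = x.1 := congrArg Subtype.val hg₁
        have hJprop : ∀ γ : {γ : A // ψ γ = x},
            ((γ.1.1 * g₁.1⁻¹ : Λ) : Equiv.Perm V) vb = vb := by
          intro γ
          have hγv : ((γ.1.1 : Equiv.Perm V))⁻¹ vb = x.1 := congrArg Subtype.val γ.2
          rw [Subgroup.coe_mul, Subgroup.coe_inv, Equiv.Perm.mul_apply]
          rw [hg₁v, ← hγv]; exact Equiv.apply_symm_apply _ _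
        have hJinj : Function.Injective
            (fun γ : {γ : A // ψ γ = x} =>
              (⟨γ.1.1 * g₁.1⁻¹, hJprop γ⟩ : {δ : Λ // (δ : Equiv.Perm V) vb = vb})) := by
          intro x₁ x₂ hx
          have h1 : (x₁.1.1 * g₁.1⁻¹ : Λ) = x₂.1.1 * g₁.1⁻¹ := by injection hx
          have h2 := mul_right_cancel h1
          apply Subtype.ext
          apply Subtype.ext
          exact h2
        haveI := hfin vb
        haveI := Finite.of_injective _ hJinj
        exact ⟨inferInstance, Nat.card_le_card_of_injective _ hJinj⟩
      · rw [not_nonempty_iff] at hne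
        refine ⟨inferInstance, ?_⟩
        rw [Nat.card_of_isEmpty]
        exact Nat.zero_le _
    haveI hAfin : Finite A := aux_finite_of_fibers ψ (fun x => (hfibA x).1)
    have hAle : Nat.card A ≤ stabV Λ vb * Nat.card {x // T.dist (Quot.out q) x = n} :=
      aux_card_le_mul ψ (stabV Λ vb) (fun x => (hfibA x).1) (fun x => (hfibA x).2)
    have hsel : ∀ w : {w : V // T.dist vb w = n ∧ πV Λ w = q},
        ∃ γ : Λ, (γ : Equiv.Perm V) (Quot.out q) = w.1 := by
      intro w
      have hpq : πV Λ (Quot.out q) = πV Λ w.1 := by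
        rw [aux_out_vrel Λ q, w.2.2]
      obtain ⟨γ, hγ, hγ2⟩ := (aux_piV_eq_iff Λ).mp hpq
      exact ⟨⟨γ, hγ⟩, hγ2⟩
    choose sel hselp using hsel
    have hΦprop : ∀ p : {w : V // T.dist vb w = n ∧ πV Λ w = q} ×
        {δ : Λ // (δ : Equiv.Perm V) (Quot.out q) = Quot.out q},
        T.dist vb (((sel p.1 * p.2.1 : Λ) : Equiv.Perm V) (Quot.out q)) = n := by
      intro p
      rw [Subgroup.coe_mul, Equiv.Perm.mul_apply, p.2.2, hselp p.1]
      exact p.1.2.1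
    have hΦinj : Function.Injective
        (fun p : {w : V // T.dist vb w = n ∧ πV Λ w = q} ×
            {δ : Λ // (δ : Equiv.Perm V) (Quot.out q) = Quot.out q} =>
          (⟨sel p.1 * p.2.1, hΦprop p⟩ : A)) := by
      rintro ⟨w₁, δ₁⟩ ⟨w₂, δ₂⟩ hx
      have h1 : (sel w₁ * δ₁.1 : Λ) = sel w₂ * δ₂.1 := by injection hx
      have happ : ((sel w₁ * δ₁.1 : Λ) : Equiv.Perm V) (Quot.out q)
          = ((sel w₂ * δ₂.1 : Λ) : Equiv.Perm V) (Quot.out q) := by rw [h1]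
      rw [Subgroup.coe_mul, Subgroup.coe_mul, Equiv.Perm.mul_apply, Equiv.Perm.mul_apply,
        δ₁.2, δ₂.2, hselp w₁, hselp w₂] at happ
      have hw : w₁ = w₂ := Subtype.ext happ
      subst hw
      have hδ : δ₁ = δ₂ := Subtype.ext (mul_left_cancel h1)
      rw [hδ]
    have hlow := Nat.card_le_card_of_injective _ hΦinj
    rw [Nat.card_prod] at hlow
    calc Nat.card {w : V // T.dist vb w = n ∧ πV Λ w = q} * stabV Λ (Quot.out q)
        ≤ Nat.card A := hlow
      _ ≤ stabV Λ vb * Nat.card {x // T.dist (Quot.out q) x = n} := hAle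
      _ = stabV Λ vb * cnt (a (Quot.out q)) (b (Quot.out q)) n := by rw [hsceq]
  -- the uniform pointwise bound
  have hstabvb : (0 : ℝ) < (stabV Λ vb : ℝ) := by exact_mod_cast hstabpos vb
  have hstabo : (0 : ℝ) < (stabV Λ (Quot.out o) : ℝ) := by exact_mod_cast hstabpos _
  have hd₁R : (0 : ℝ) < (d₁ : ℝ) := by exact_mod_cast (by omega : 0 < d₁)
  have hd₂R : (0 : ℝ) < (d₂ : ℝ) := by exact_mod_cast (by omega : 0 < d₂)
  have hDpos : (0 : ℝ) < (d₁ : ℝ) * (d₂ : ℝ) := mul_pos hd₁R hd₂R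
  set C : ℝ := (d₁ : ℝ) * (d₂ : ℝ) * (stabV Λ vb : ℝ) / (stabV Λ (Quot.out o) : ℝ) with hC
  have hCpos : 0 < C := by
    rw [hC]
    exact div_pos (mul_pos hDpos hstabvb) hstabo
  have hpush : ∀ (n : ℕ) (q : VQ Λ), sphPush T Λ vb n q ≤ C * (N q)⁻¹ := by
    intro n q
    have hden : (Nat.card {w : V // T.dist vb w = n} : ℝ) = (cnt (a vb) (b vb) n : ℝ) := by
      exact_mod_cast hsceq vb n
    have hdenpos : (0 : ℝ) < (cnt (a vb) (b vb) n : ℝ) := by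
      exact_mod_cast hscpos vb n
    have houtpos : (0 : ℝ) < (stabV Λ (Quot.out q) : ℝ) := by
      exact_mod_cast hstabpos _
    have h1 : (Nat.card {w : V // T.dist vb w = n ∧ πV Λ w = q} : ℝ)
        * (stabV Λ (Quot.out q) : ℝ)
        ≤ (stabV Λ vb : ℝ) * (cnt (a (Quot.out q)) (b (Quot.out q)) n : ℝ) := by
      exact_mod_cast hfiber n q
    have h2 : (cnt (a (Quot.out q)) (b (Quot.out q)) n : ℝ)
        ≤ (d₁ : ℝ) * (d₂ : ℝ) * (cnt (a vb) (b vb) n : ℝ) := by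
      exact_mod_cast hsccomp (Quot.out q) vb n
    show (Nat.card {w : V // T.dist vb w = n ∧ πV Λ w = q} : ℝ)
        / (Nat.card {w : V // T.dist vb w = n} : ℝ) ≤ C * (N q)⁻¹
    rw [hden, hNval q, inv_div, hC]
    have hRHS : (d₁ : ℝ) * (d₂ : ℝ) * (stabV Λ vb : ℝ) / (stabV Λ (Quot.out o) : ℝ)
        * ((stabV Λ (Quot.out o) : ℝ) / (stabV Λ (Quot.out q) : ℝ))
        = (d₁ : ℝ) * (d₂ : ℝ) * (stabV Λ vb : ℝ) / (stabV Λ (Quot.out q) : ℝ) := by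
      field_simp
    rw [hRHS, div_le_div_iff₀ hdenpos houtpos]
    calc (Nat.card {w : V // T.dist vb w = n ∧ πV Λ w = q} : ℝ)
        * (stabV Λ (Quot.out q) : ℝ)
        ≤ (stabV Λ vb : ℝ) * (cnt (a (Quot.out q)) (b (Quot.out q)) n : ℝ) := h1
      _ ≤ (stabV Λ vb : ℝ) * ((d₁ : ℝ) * (d₂ : ℝ) * (cnt (a vb) (b vb) n : ℝ)) :=
          mul_le_mul_of_nonneg_left h2 hstabvb.le
      _ = (d₁ : ℝ) * (d₂ : ℝ) * (stabV Λ vb : ℝ) * (cnt (a vb) (b vb) n : ℝ) := by ring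
  -- choose the finite set K
  have htend := tendsto_tsum_compl_atTop_zero (fun q : VQ Λ => (N q)⁻¹)
  have hev := (tendsto_order.1 htend).2 (ε / C) (div_pos hε hCpos)
  obtain ⟨K, hK⟩ := hev.exists
  refine ⟨K, fun n => ?_⟩
  -- image of the sphere in the quotient
  haveI : Finite {w : V // T.dist vb w = n} := hscfin vb n
  have hJfin : (Set.range (fun w : {w : V // T.dist vb w = n} => πV Λ w.1)).Finite :=
    Set.finite_range _
  set J : Finset (VQ Λ) := hJfin.toFinset with hJ
  have hmemJ : ∀ w : {w : V // T.dist vb w = n}, πV Λ w.1 ∈ J := by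
    intro w
    rw [hJ, Set.Finite.mem_toFinset]
    exact ⟨w, rfl⟩
  set f : {w : V // T.dist vb w = n} → ↥J := fun w => ⟨πV Λ w.1, hmemJ w⟩ with hf
  have hfibJ : ∀ s : ↥J, Finite {w : {w : V // T.dist vb w = n} // f w = s} :=
    fun s => inferInstance
  have hcards := aux_card_eq_sum_fibers f hfibJ
  have hfibeq : ∀ s : ↥J, Nat.card {w : {w : V // T.dist vb w = n} // f w = s}
      = Nat.card {w : V // T.dist vb w = n ∧ πV Λ w = s.1} := by
    intro s
    apply Nat.card_congr
    refine ⟨fun x => ⟨x.1.1, x.1.2, ?_⟩, fun y => ⟨⟨y.1, y.2.1⟩, ?_⟩, ?_, ?_⟩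
    · exact congrArg Subtype.val x.2
    · exact Subtype.ext y.2.2
    · rintro ⟨⟨w, hw⟩, hfw⟩
      rfl
    · rintro ⟨w, hw⟩
      rfl
  have htotN : ∑ s : ↥J, Nat.card {w : V // T.dist vb w = n ∧ πV Λ w = s.1}
      = Nat.card {w : V // T.dist vb w = n} := by
    rw [hcards]
    exact (Finset.sum_congr rfl (fun s _ => hfibeq s)).symm
  have hdenpos : (0 : ℝ) < (Nat.card {w : V // T.dist vb w = n} : ℝ) := by
    rw [hsceq vb n]
    exact_mod_cast hscpos vb n
  have hpushdef : ∀ q : VQ Λ, sphPush T Λ vb n q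
      = (Nat.card {w : V // T.dist vb w = n ∧ πV Λ w = q} : ℝ)
        / (Nat.card {w : V // T.dist vb w = n} : ℝ) := fun q => rfl
  have hpush0 : ∀ q : VQ Λ, 0 ≤ sphPush T Λ vb n q := by
    intro q
    rw [hpushdef q]
    exact div_nonneg (by positivity) (by positivity)
  have hsum1 : ∑ q ∈ J, sphPush T Λ vb n q = 1 := by
    rw [← Finset.sum_coe_sort J (sphPush T Λ vb n)]
    have hterm : ∑ s : ↥J, sphPush T Λ vb n s.1
        = (∑ s : ↥J, (Nat.card {w : V // T.dist vb w = n ∧ πV Λ w = s.1} : ℝ))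
          / (Nat.card {w : V // T.dist vb w = n} : ℝ) := by
      rw [Finset.sum_div]
      exact Finset.sum_congr rfl (fun s _ => hpushdef s.1)
    rw [hterm]
    rw [show (∑ s : ↥J, (Nat.card {w : V // T.dist vb w = n ∧ πV Λ w = s.1} : ℝ))
        = (Nat.card {w : V // T.dist vb w = n} : ℝ) by exact_mod_cast htotN]
    exact div_self hdenpos.ne'
  -- tail estimate
  have htail : ∑ q ∈ J \ K, sphPush T Λ vb n q < ε := by
    have hle1 : ∑ q ∈ J \ K, sphPush T Λ vb n q ≤ ∑ q ∈ J \ K, C * (N q)⁻¹ :=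
      Finset.sum_le_sum (fun q _ => hpush n q)
    have hNnonneg : ∀ q : VQ Λ, 0 ≤ (N q)⁻¹ := fun q => (inv_nonneg).mpr (hNpos q).le
    have hle3 : ∑ q ∈ J \ K, (N q)⁻¹ ≤ ∑' x : {q : VQ Λ // q ∉ K}, (N x.1)⁻¹ := by
      have hemb : Function.Injective
          (fun x : {q : VQ Λ // q ∈ J \ K} =>
            (⟨x.1, (Finset.mem_sdiff.mp x.2).2⟩ : {q : VQ Λ // q ∉ K})) := by
        intro x y hxy
        apply Subtype.ext
        injection hxy
      set emb : {q : VQ Λ // q ∈ J \ K} ↪ {q : VQ Λ // q ∉ K} := ⟨_, hemb⟩ with he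
      calc ∑ q ∈ J \ K, (N q)⁻¹ = ∑ x ∈ (J \ K).attach, (N x.1)⁻¹ :=
            (Finset.sum_attach _ _).symm
        _ = ∑ x ∈ (J \ K).attach.map emb, (N x.1)⁻¹ := by
            rw [Finset.sum_map]
            rfl
        _ ≤ ∑' x : {q : VQ Λ // q ∉ K}, (N x.1)⁻¹ :=
            Summable.sum_le_tsum _ (fun i _ => hNnonneg i.1) (hsum.subtype _)
    calc ∑ q ∈ J \ K, sphPush T Λ vb n q ≤ ∑ q ∈ J \ K, C * (N q)⁻¹ := hle1
      _ = C * ∑ q ∈ J \ K, (N q)⁻¹ := (Finset.mul_sum _ _ _).symm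
      _ ≤ C * ∑' x : {q : VQ Λ // q ∉ K}, (N x.1)⁻¹ :=
          mul_le_mul_of_nonneg_left hle3 hCpos.le
      _ < C * (ε / C) := by
          exact (mul_lt_mul_iff_right₀ hCpos).mpr hK
      _ = ε := by field_simp
  -- conclude
  have hsplit : ∑ q ∈ J \ K, sphPush T Λ vb n q + ∑ q ∈ J ∩ K, sphPush T Λ vb n q
      = ∑ q ∈ J, sphPush T Λ vb n q := by
    have hsub : J ∩ K ⊆ J := Finset.inter_subset_left
    have := Finset.sum_sdiff (f := sphPush T Λ vb n) hsub
    rwa [Finset.sdiff_inter_self_left] at this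
  have hKsub : ∑ q ∈ J ∩ K, sphPush T Λ vb n q ≤ ∑ q ∈ K, sphPush T Λ vb n q :=
    Finset.sum_le_sum_of_subset_of_nonneg Finset.inter_subset_right
      (fun q _ _ => hpush0 q)
  have hJK : 1 - ε ≤ ∑ q ∈ J ∩ K, sphPush T Λ vb n q := by
    have := hsplit
    rw [hsum1] at this
    linarith [htail]
  linarith [hKsub, hJK]

end TreeDyn
end

section
/- Let T be a (d₁,d₂)-biregular tree with d₁,d₂ ≥ 3 and Γ ≤ Aut(T) a tree lattice. Then the associated Markov chain (Mₙ) on EQ is irreducible: for all e, f ∈ EQ there exists n ≥ 1 with Pⁿ(e,f) > 0. -/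
/-!
Call a move `g → g'` of the chain possible if `P(g, g') > 0`. Possible moves can be reversed:
`g → g'` gives `ḡ' → ḡ`. So it suffices that every edge `e` reaches `ē`: then `e` reaches every
edge leaving its head, and, following a path in `T`, every edge.

If `e` did not reach `ē`, every edge `g` reachable from `e` would have `ind(ḡ) = 1` (else
`e → g → ḡ → ē`), and distinct reachable edges would have distinct heads (else
`g₁ → ḡ₂ → ē`). Then `N(∂₁g) = N(∂₀g) / ind(g)` does not increase along the chain, so the
summability of `1 / N` makes the reachable set `R` finite. With `μ(g) = 1 / N(∂₁g)`, each `g ∈ R`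
gives mass `(deg(∂₁g) - 1) μ(g) ≥ 2 μ(g)` to the edges leaving `∂₁g` other than `ḡ`; these lie
in `R` and are different for different `g`, so `∑_R μ ≥ 2 ∑_R μ`, which is absurd.
-/

open Filter Topology MeasureTheory

attribute [local instance] Classical.propDecidable

namespace TreeDyn


variable {V : Type*}

variable (T : SimpleGraph V) (Λ : Subgroup (Equiv.Perm V))

section Quotient

lemma vrel_equivalence : Equivalence (vrel Λ) where
  refl _ := ⟨1, Λ.one_mem, rfl⟩
  symm := by
    rintro u _ ⟨γ, hγ, rfl⟩
    exact ⟨γ⁻¹, Λ.inv_mem hγ, γ.symm_apply_apply u⟩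
  trans := by
    rintro _ _ _ ⟨γ, hγ, rfl⟩ ⟨δ, hδ, rfl⟩
    exact ⟨δ * γ, Λ.mul_mem hδ hγ, rfl⟩

lemma erel_equivalence : Equivalence (erel T Λ) where
  refl _ := ⟨1, Λ.one_mem, rfl, rfl⟩
  symm := by
    rintro x y ⟨γ, hγ, h₁, h₂⟩
    exact ⟨γ⁻¹, Λ.inv_mem hγ, by rw [← h₁]; exact γ.symm_apply_apply _,
      by rw [← h₂]; exact γ.symm_apply_apply _⟩
  trans := by
    rintro _ _ _ ⟨γ, hγ, h₁, h₂⟩ ⟨δ, hδ, h₃, h₄⟩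
    exact ⟨δ * γ, Λ.mul_mem hδ hγ, by rw [Equiv.Perm.mul_apply, h₁, h₃],
      by rw [Equiv.Perm.mul_apply, h₂, h₄]⟩

lemma πV_eq_πV_iff {u v : V} : πV Λ u = πV Λ v ↔ vrel Λ u v :=
  Quot.eq.trans (vrel_equivalence Λ).eqvGen_iff

lemma πE_eq_πE_iff {x y : DEdge T} : πE T Λ x = πE T Λ y ↔ erel T Λ x y :=
  Quot.eq.trans (erel_equivalence T Λ).eqvGen_iff

lemma erel_out_πE (x : DEdge T) : erel T Λ (Quot.out (πE T Λ x)) x :=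
  (πE_eq_πE_iff T Λ).mp (Quot.out_eq _)

lemma tailQ_πE (x : DEdge T) : tailQ T Λ (πE T Λ x) = πV Λ x.1.1 := by
  obtain ⟨γ, hγ, h₁, -⟩ := erel_out_πE T Λ x
  exact (πV_eq_πV_iff Λ).mpr ⟨γ, hγ, h₁⟩

lemma headQ_πE (x : DEdge T) : headQ T Λ (πE T Λ x) = πV Λ x.1.2 := by
  obtain ⟨γ, hγ, -, h₂⟩ := erel_out_πE T Λ x
  exact (πV_eq_πV_iff Λ).mpr ⟨γ, hγ, h₂⟩

lemma barQ_πE (x : DEdge T) : barQ T Λ (πE T Λ x) = πE T Λ ⟨(x.1.2, x.1.1), x.2.symm⟩ := by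
  obtain ⟨γ, hγ, h₁, h₂⟩ := erel_out_πE T Λ x
  exact (πE_eq_πE_iff T Λ).mpr ⟨γ, hγ, h₂, h₁⟩

lemma barQ_barQ (g : EQ T Λ) : barQ T Λ (barQ T Λ g) = g := by
  induction g using Quot.ind with
  | mk x => exact (congrArg _ (barQ_πE T Λ x)).trans (barQ_πE T Λ _)

lemma barQ_injective : Function.Injective (barQ T Λ) :=
  Function.LeftInverse.injective (barQ_barQ T Λ)

lemma tailQ_barQ (g : EQ T Λ) : tailQ T Λ (barQ T Λ g) = headQ T Λ g :=
  tailQ_πE T Λ _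

lemma headQ_barQ (g : EQ T Λ) : headQ T Λ (barQ T Λ g) = tailQ T Λ g :=
  headQ_πE T Λ _

lemma exists_πE_eq (hΛ : ∀ γ ∈ Λ, ∀ u v, T.Adj (γ u) (γ v) ↔ T.Adj u v) {g : EQ T Λ} {w : V}
    (hw : tailQ T Λ g = πV Λ w) : ∃ (c : V) (h : T.Adj w c), πE T Λ ⟨(w, c), h⟩ = g := by
  obtain ⟨γ, hγ, hγw⟩ := (πV_eq_πV_iff Λ).mp hw
  have hadj : T.Adj w (γ (Quot.out g).1.2) := by
    rw [← hγw]
    exact (hΛ γ hγ _ _).mpr (Quot.out g).2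
  refine ⟨_, hadj, Eq.trans ?_ (Quot.out_eq g)⟩
  exact (πE_eq_πE_iff T Λ).mpr ((erel_equivalence T Λ).symm ⟨γ, hγ, hγw, rfl⟩)

end Quotient

section Index

lemma stabV_eq_card_stabilizer (v : V) : stabV Λ v = Nat.card (MulAction.stabilizer Λ v) :=
  rfl

lemma stabE_eq_card_stabilizer (x : DEdge T) :
    stabE T Λ x = Nat.card (MulAction.stabilizer Λ x.1) :=
  Nat.card_congr <| Equiv.subtypeEquivRight fun _ => by
    rw [MulAction.mem_stabilizer_iff, Prod.ext_iff]
    rfl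

lemma indQ_πE (x : DEdge T) : indQ T Λ (πE T Λ x) = stabV Λ x.1.1 / stabE T Λ x := by
  obtain ⟨γ, hγ, h₁, h₂⟩ := erel_out_πE T Λ x
  have hv : x.1.1 = (⟨γ, hγ⟩ : Λ) • (Quot.out (πE T Λ x)).1.1 := h₁.symm
  have hx : x.1 = (⟨γ, hγ⟩ : Λ) • (Quot.out (πE T Λ x)).1 := Prod.ext h₁.symm h₂.symm
  rw [indQ, stabV_eq_card_stabilizer, stabV_eq_card_stabilizer, stabE_eq_card_stabilizer,
    stabE_eq_card_stabilizer, Nat.card_congr (MulAction.stabilizerEquivStabilizer hv).toEquiv,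
    Nat.card_congr (MulAction.stabilizerEquivStabilizer hx).toEquiv]

def liftHeads (w : V) (g : EQ T Λ) : Set V :=
  {c | ∃ h : T.Adj w c, πE T Λ ⟨(w, c), h⟩ = g}

variable {T Λ} in
lemma orbit_stabilizer_eq_liftHeads (hΛ : ∀ γ ∈ Λ, ∀ u v, T.Adj (γ u) (γ v) ↔ T.Adj u v)
    (x : DEdge T) :
    MulAction.orbit (MulAction.stabilizer Λ x.1.1) x.1.2 = liftHeads T Λ x.1.1 (πE T Λ x) := by
  ext c
  constructor
  · rintro ⟨δ, rfl⟩
    have hδ : (δ : Equiv.Perm V) x.1.1 = x.1.1 := δ.2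
    have hadj : T.Adj x.1.1 ((δ : Equiv.Perm V) x.1.2) := by
      have := (hΛ _ (δ : Λ).2 x.1.1 x.1.2).mpr x.2
      rwa [hδ] at this
    exact ⟨hadj, Eq.symm <| (πE_eq_πE_iff T Λ).mpr ⟨δ, (δ : Λ).2, hδ, rfl⟩⟩
  · rintro ⟨h, hc⟩
    obtain ⟨γ, hγ, hγw, hγc⟩ := (πE_eq_πE_iff T Λ).mp hc
    exact MulAction.mem_orbit_symm.mp ⟨⟨⟨γ, hγ⟩, hγw⟩, hγc⟩

/-- Orbit–stabilizer for the action of `Λ_w` on the neighbours of `w`. -/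
lemma indQ_πE_eq_ncard (hΛ : ∀ γ ∈ Λ, ∀ u v, T.Adj (γ u) (γ v) ↔ T.Adj u v)
    (hfin : ∀ v : V, Finite {γ : Λ // (γ : Equiv.Perm V) v = v}) (x : DEdge T) :
    indQ T Λ (πE T Λ x) = (liftHeads T Λ x.1.1 (πE T Λ x)).ncard := by
  set G := MulAction.stabilizer Λ x.1.1
  have : Finite G := hfin x.1.1
  have hstab : Nat.card (MulAction.stabilizer G x.1.2) = stabE T Λ x :=
    Nat.card_congr
      { toFun := fun δ => ⟨δ.1.1, δ.1.2, δ.2⟩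
        invFun := fun γ => ⟨⟨γ.1, γ.2.1⟩, γ.2.2⟩ }
  rw [indQ_πE, stabV_eq_card_stabilizer, ← orbit_stabilizer_eq_liftHeads hΛ,
    ← MulAction.index_stabilizer, ← hstab, ← Subgroup.card_mul_index (MulAction.stabilizer G x.1.2),
    Nat.mul_div_cancel_left _ Nat.card_pos]

variable {T Λ} in
lemma indQ_eq_ncard_liftHeads (hΛ : ∀ γ ∈ Λ, ∀ u v, T.Adj (γ u) (γ v) ↔ T.Adj u v)
    (hfin : ∀ v : V, Finite {γ : Λ // (γ : Equiv.Perm V) v = v}) {g : EQ T Λ} {w : V}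
    (hw : tailQ T Λ g = πV Λ w) : indQ T Λ g = (liftHeads T Λ w g).ncard := by
  obtain ⟨c, h, rfl⟩ := exists_πE_eq T Λ hΛ hw
  exact indQ_πE_eq_ncard T Λ hΛ hfin _

end Index

section Degree

variable {T Λ} [∀ v, Finite (T.neighborSet v)]
  (hΛ : ∀ γ ∈ Λ, ∀ u v, T.Adj (γ u) (γ v) ↔ T.Adj u v)
  (hfin : ∀ v : V, Finite {γ : Λ // (γ : Equiv.Perm V) v = v})

include hΛ hfin in
lemma one_le_indQ (g : EQ T Λ) : 1 ≤ indQ T Λ g := by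
  rw [indQ_eq_ncard_liftHeads hΛ hfin (w := (Quot.out g).1.1) rfl]
  have hfinite : (liftHeads T Λ (Quot.out g).1.1 g).Finite :=
    (Set.toFinite (T.neighborSet _)).subset fun _ ⟨h, _⟩ => h
  exact (Set.ncard_pos hfinite).mpr ⟨_, (Quot.out g).2, Quot.out_eq g⟩

include hΛ in
lemma finite_setOf_tailQ_eq (v : VQ Λ) : {g | tailQ T Λ g = v}.Finite := by
  refine (Set.finite_range fun c : T.neighborSet (Quot.out v) => πE T Λ ⟨(_, c), c.2⟩).subset ?_
  intro g hg
  obtain ⟨c, h, hc⟩ := exists_πE_eq T Λ hΛ (hg.trans (Quot.out_eq v).symm)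
  exact ⟨⟨c, h⟩, hc⟩

include hΛ in
lemma finite_setOf_headQ_eq (v : VQ Λ) : {g | headQ T Λ g = v}.Finite :=
  ((finite_setOf_tailQ_eq hΛ v).preimage (barQ_injective T Λ).injOn).subset
    fun g (hg : headQ T Λ g = v) => (tailQ_barQ T Λ g).trans hg

include hΛ hfin in
lemma sum_indQ_eq_degQ (v : VQ Λ) (hs : {g | tailQ T Λ g = v}.Finite) :
    ∑ g ∈ hs.toFinset, indQ T Λ g = degQ T Λ v := by
  set w := Quot.out v
  have hw : πV Λ w = v := Quot.out_eq v
  let φ : T.neighborSet w → {g // tailQ T Λ g = v} :=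
    fun c => ⟨πE T Λ ⟨(w, c), c.2⟩, (tailQ_πE T Λ _).trans hw⟩
  have : Fintype {g // tailQ T Λ g = v} := hs.fintype
  have hfiber (g : {g // tailQ T Λ g = v}) : Nat.card {c // φ c = g} = indQ T Λ g := by
    rw [indQ_eq_ncard_liftHeads hΛ hfin (g.2.trans hw.symm), ← Nat.card_coe_set_eq]
    exact Nat.card_congr <| (Equiv.subtypeSubtypeEquivSubtypeExists _ _).trans <|
      Equiv.subtypeEquivRight fun c => exists_congr fun _ => Subtype.ext_iff
  rw [degQ, ← Nat.card_congr (Equiv.sigmaFiberEquiv φ), Nat.card_sigma]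
  simp_rw [hfiber]
  exact Finset.sum_subtype _ (fun g => Set.Finite.mem_toFinset hs) (indQ T Λ)

end Degree

def Step (g g' : EQ T Λ) : Prop := 0 < kerP T Λ g g'

section Kernel

variable {T Λ} [∀ v, Finite (T.neighborSet v)]
  (hΛ : ∀ γ ∈ Λ, ∀ u v, T.Adj (γ u) (γ v) ↔ T.Adj u v)
  (hfin : ∀ v : V, Finite {γ : Λ // (γ : Equiv.Perm V) v = v})
  (hdeg : ∀ v : V, 2 ≤ Nat.card (T.neighborSet v))

omit [∀ v, Finite (T.neighborSet v)] in
include hdeg in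
lemma one_lt_degQ (v : VQ Λ) : (1 : ℝ) < degQ T Λ v := by
  exact_mod_cast hdeg (Quot.out v)

include hΛ hfin hdeg in
lemma kerP_nonneg (g g' : EQ T Λ) : 0 ≤ kerP T Λ g g' := by
  have hind : (1 : ℝ) ≤ indQ T Λ g' := by exact_mod_cast one_le_indQ hΛ hfin g'
  have hden := one_lt_degQ hdeg (headQ T Λ g)
  unfold kerP
  split_ifs <;> first | rfl | exact div_nonneg (by linarith) (by linarith)

include hΛ hfin hdeg in
lemma step_iff {g g' : EQ T Λ} :
    Step T Λ g g' ↔ headQ T Λ g = tailQ T Λ g' ∧ (g' = barQ T Λ g → 2 ≤ indQ T Λ g') := by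
  have hind : (1 : ℝ) ≤ indQ T Λ g' := by exact_mod_cast one_le_indQ hΛ hfin g'
  have hden : (0 : ℝ) < degQ T Λ (headQ T Λ g) - 1 := by
    linarith [one_lt_degQ hdeg (headQ T Λ g)]
  unfold Step kerP
  split_ifs with hhead hbar
  · rw [div_pos_iff_of_pos_right hden, sub_pos, Nat.one_lt_cast]
    exact ⟨fun h => ⟨hhead, fun _ => h⟩, fun h => h.2 hbar⟩
  · exact iff_of_true (div_pos (by linarith) hden) ⟨hhead, fun h => absurd h hbar⟩
  · exact iff_of_false (lt_irrefl 0) fun h => hhead h.1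

omit [∀ v, Finite (T.neighborSet v)] in
lemma headQ_eq_tailQ_of_step {g g' : EQ T Λ} (h : Step T Λ g g') :
    headQ T Λ g = tailQ T Λ g' := by
  by_contra hne
  unfold Step kerP at h
  rw [if_neg hne] at h
  exact lt_irrefl 0 h

include hΛ hfin hdeg in
lemma step_of_ne_barQ {g g' : EQ T Λ} (h : headQ T Λ g = tailQ T Λ g') (hne : g' ≠ barQ T Λ g) :
    Step T Λ g g' :=
  (step_iff hΛ hfin hdeg).mpr ⟨h, fun h' => absurd h' hne⟩

include hΛ hfin hdeg in
lemma step_barQ {g : EQ T Λ} (h : 2 ≤ indQ T Λ (barQ T Λ g)) : Step T Λ g (barQ T Λ g) :=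
  (step_iff hΛ hfin hdeg).mpr ⟨(tailQ_barQ T Λ g).symm, fun _ => h⟩

include hΛ hfin hdeg in
lemma Step.barQ {g g' : EQ T Λ} (h : Step T Λ g g') : Step T Λ (barQ T Λ g') (barQ T Λ g) := by
  obtain ⟨hhead, hbar⟩ := (step_iff hΛ hfin hdeg).mp h
  refine (step_iff hΛ hfin hdeg).mpr ⟨by rw [headQ_barQ, tailQ_barQ, hhead], fun h' => ?_⟩
  rw [barQ_barQ] at h'
  rw [h']
  exact hbar h'.symm

include hΛ hfin hdeg in
lemma kerPn_nonneg (n : ℕ) (e f : EQ T Λ) : 0 ≤ kerPn T Λ n e f := by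
  induction n generalizing f with
  | zero => unfold kerPn; split_ifs <;> norm_num
  | succ n ih => exact tsum_nonneg fun g => mul_nonneg (ih g) (kerP_nonneg hΛ hfin hdeg g f)

include hΛ hfin hdeg in
lemma kerPn_succ_pos {n : ℕ} {e g f : EQ T Λ} (hn : 0 < kerPn T Λ n e g) (hg : Step T Λ g f) :
    0 < kerPn T Λ (n + 1) e f := by
  have hsum : Summable fun g' => kerPn T Λ n e g' * kerP T Λ g' f := by
    refine summable_of_ne_finset_zero (s := (finite_setOf_headQ_eq hΛ (tailQ T Λ f)).toFinset) ?_
    intro g' hg'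
    rw [kerP, if_neg (by simpa using hg'), mul_zero]
  exact (mul_pos hn hg).trans_le <| hsum.le_tsum g fun g' _ =>
    mul_nonneg (kerPn_nonneg hΛ hfin hdeg n e g') (kerP_nonneg hΛ hfin hdeg g' f)

include hΛ hfin hdeg in
lemma exists_kerPn_pos_of_transGen {e f : EQ T Λ} (h : Relation.TransGen (Step T Λ) e f) :
    ∃ n, 1 ≤ n ∧ 0 < kerPn T Λ n e f := by
  induction h with
  | single hstep => exact ⟨1, le_rfl, kerPn_succ_pos hΛ hfin hdeg (by simp [kerPn]) hstep⟩
  | tail _ hstep ih =>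
    obtain ⟨n, hn, hpos⟩ := ih
    exact ⟨n + 1, by omega, kerPn_succ_pos hΛ hfin hdeg hpos hstep⟩

end Kernel

lemma finite_setOf_le_of_summable_inv {α : Type*} {N : α → ℝ} (hpos : ∀ a, 0 < N a)
    (hsum : Summable fun a => (N a)⁻¹) (c : ℝ) : {a | N a ≤ c}.Finite := by
  rcases le_or_gt c 0 with hc | hc
  · exact Set.finite_empty.subset fun a (ha : N a ≤ c) => absurd (hpos a) (by linarith)
  have hsmall : ∀ᶠ a in Filter.cofinite, (N a)⁻¹ < c⁻¹ :=
    hsum.tendsto_cofinite_zero.eventually (gt_mem_nhds (inv_pos.mpr hc))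
  exact (Filter.eventually_cofinite.mp hsmall).subset fun a (ha : N a ≤ c) =>
    not_lt.mpr (inv_anti₀ (hpos a) ha)

section Reach

variable {T Λ} [∀ v, Finite (T.neighborSet v)]
  (hΛ : ∀ γ ∈ Λ, ∀ u v, T.Adj (γ u) (γ v) ↔ T.Adj u v)
  (hfin : ∀ v : V, Finite {γ : Λ // (γ : Equiv.Perm V) v = v})
  (hdeg : ∀ v : V, 3 ≤ Nat.card (T.neighborSet v))
  (N : VQ Λ → ℝ) (hNpos : ∀ v, 0 < N v)
  (hNrel : ∀ g : EQ T Λ, N (headQ T Λ g) = deltaQ T Λ g * N (tailQ T Λ g))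
  (hNsum : Summable fun v : VQ Λ => (N v)⁻¹)

omit [∀ v, Finite (T.neighborSet v)] in
include hNrel in
lemma apply_headQ_eq_div {g : EQ T Λ} (hbar : indQ T Λ (barQ T Λ g) = 1) :
    N (headQ T Λ g) = N (tailQ T Λ g) / indQ T Λ g := by
  rw [hNrel, deltaQ, hbar, Nat.cast_one, div_mul_eq_mul_div, one_mul]

include hΛ hfin hdeg hNpos hNrel in
lemma two_mul_inv_le_sum_erase_barQ {g : EQ T Λ} (hs : {f | tailQ T Λ f = headQ T Λ g}.Finite)
    (hbar : indQ T Λ (barQ T Λ g) = 1)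
    (hbar' : ∀ f ∈ hs.toFinset.erase (barQ T Λ g), indQ T Λ (barQ T Λ f) = 1) :
    2 * (N (headQ T Λ g))⁻¹ ≤ ∑ f ∈ hs.toFinset.erase (barQ T Λ g), (N (headQ T Λ f))⁻¹ := by
  have hterm : ∀ f ∈ hs.toFinset.erase (barQ T Λ g),
      (N (headQ T Λ f))⁻¹ = indQ T Λ f * (N (headQ T Λ g))⁻¹ := fun f hf => by
    have htail : tailQ T Λ f = headQ T Λ g := by simpa using Finset.mem_of_mem_erase hf
    rw [apply_headQ_eq_div N hNrel (hbar' f hf), htail, inv_div, div_eq_mul_inv]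
  have hmem : barQ T Λ g ∈ hs.toFinset := hs.mem_toFinset.mpr (tailQ_barQ T Λ g)
  have hcount : ∑ f ∈ hs.toFinset.erase (barQ T Λ g), indQ T Λ f + 1 = degQ T Λ (headQ T Λ g) := by
    rw [← hbar, Finset.sum_erase_add _ _ hmem, sum_indQ_eq_degQ hΛ hfin]
  have htwo : (2 : ℝ) ≤ ∑ f ∈ hs.toFinset.erase (barQ T Λ g), (indQ T Λ f : ℝ) := by
    have := hdeg (Quot.out (headQ T Λ g))
    exact_mod_cast (show 2 ≤ ∑ f ∈ hs.toFinset.erase (barQ T Λ g), indQ T Λ f by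
      rw [degQ] at hcount; omega)
  rw [Finset.sum_congr rfl hterm, ← Finset.sum_mul]
  exact mul_le_mul_of_nonneg_right htwo (inv_pos.mpr (hNpos _)).le

include hΛ hfin hdeg hNpos hNrel in
lemma infinite_of_step_closed {R : Set (EQ T Λ)} (hR : R.Nonempty)
    (hclosed : ∀ g ∈ R, ∀ g', Step T Λ g g' → g' ∈ R) (hinj : Set.InjOn (headQ T Λ) R)
    (hbar : ∀ g ∈ R, indQ T Λ (barQ T Λ g) = 1) : R.Infinite := by
  intro hfinite
  have hdeg₂ v := Nat.le_of_succ_le (hdeg v)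
  set s := hfinite.toFinset
  set μ : EQ T Λ → ℝ := fun g => (N (headQ T Λ g))⁻¹
  have hμ : ∀ g, 0 < μ g := fun g => inv_pos.mpr (hNpos _)
  set out : EQ T Λ → Finset (EQ T Λ) := fun g =>
    (finite_setOf_tailQ_eq hΛ (headQ T Λ g)).toFinset.erase (barQ T Λ g)
  have htail : ∀ g f, f ∈ out g → tailQ T Λ f = headQ T Λ g := fun g f hf => by
    simpa using Finset.mem_of_mem_erase hf
  have hout : ∀ g ∈ s, out g ⊆ s := fun g hg f hf =>
    hfinite.mem_toFinset.mpr <| hclosed g (hfinite.mem_toFinset.mp hg) f <|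
      step_of_ne_barQ hΛ hfin hdeg₂ (htail g f hf).symm (Finset.ne_of_mem_erase hf)
  have hdisj : (s : Set (EQ T Λ)).PairwiseDisjoint out := fun g₁ h₁ g₂ h₂ hne =>
    Finset.disjoint_left.mpr fun f hf₁ hf₂ => hne <|
      hinj (hfinite.mem_toFinset.mp h₁) (hfinite.mem_toFinset.mp h₂)
        ((htail g₁ f hf₁).symm.trans (htail g₂ f hf₂))
  have hmass : ∀ g ∈ s, 2 * μ g ≤ ∑ f ∈ out g, μ f := fun g hg =>
    two_mul_inv_le_sum_erase_barQ hΛ hfin hdeg N hNpos hNrel _ (hbar g (hfinite.mem_toFinset.mp hg))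
      fun f hf => hbar f (hfinite.mem_toFinset.mp (hout g hg hf))
  have hpos : 0 < ∑ g ∈ s, μ g :=
    Finset.sum_pos (fun g _ => hμ g) (hfinite.toFinset_nonempty.mpr hR)
  have : 2 * ∑ g ∈ s, μ g ≤ ∑ g ∈ s, μ g := calc
    2 * ∑ g ∈ s, μ g = ∑ g ∈ s, 2 * μ g := Finset.mul_sum _ _ _
    _ ≤ ∑ g ∈ s, ∑ f ∈ out g, μ f := Finset.sum_le_sum hmass
    _ = ∑ f ∈ s.biUnion out, μ f := (Finset.sum_biUnion hdisj).symm
    _ ≤ ∑ f ∈ s, μ f := Finset.sum_le_sum_of_subset_of_nonneg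
      (Finset.biUnion_subset.mpr hout) fun f _ _ => (hμ f).le
  linarith

include hΛ hfin hdeg in
lemma reflTransGen_barQ {e g : EQ T Λ} (h : Relation.ReflTransGen (Step T Λ) e g) :
    Relation.ReflTransGen (Step T Λ) (barQ T Λ g) (barQ T Λ e) := by
  induction h with
  | refl => exact .refl
  | tail _ hstep ih => exact ih.head (hstep.barQ hΛ hfin (fun v => Nat.le_of_succ_le (hdeg v)))

include hΛ hfin hdeg hNpos hNrel hNsum in
lemma transGen_barQ (e : EQ T Λ) : Relation.TransGen (Step T Λ) e (barQ T Λ e) := by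
  have hdeg₂ v := Nat.le_of_succ_le (hdeg v)
  by_contra hne
  set R := {g | Relation.ReflTransGen (Step T Λ) e g}
  have hbar : ∀ g ∈ R, indQ T Λ (barQ T Λ g) = 1 := by
    intro g hg
    by_contra h1
    have h2 : 2 ≤ indQ T Λ (barQ T Λ g) := by have := one_le_indQ hΛ hfin (barQ T Λ g); omega
    exact hne <| (Relation.TransGen.tail' hg (step_barQ hΛ hfin hdeg₂ h2)).trans_left
      (reflTransGen_barQ hΛ hfin hdeg hg)
  have hinj : Set.InjOn (headQ T Λ) R := by
    intro g₁ h₁ g₂ h₂ hhead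
    by_contra hne'
    have hstep : Step T Λ g₁ (barQ T Λ g₂) := step_of_ne_barQ hΛ hfin hdeg₂
      (hhead.trans (tailQ_barQ T Λ g₂).symm) fun h => hne' (barQ_injective T Λ h).symm
    exact hne <| (Relation.TransGen.tail' h₁ hstep).trans_left (reflTransGen_barQ hΛ hfin hdeg h₂)
  have hle : ∀ g, Relation.ReflTransGen (Step T Λ) e g → N (headQ T Λ g) ≤ N (headQ T Λ e) := by
    intro g hg
    induction hg with
    | refl => exact le_rfl
    | @tail g g' hreach hstep ih =>
      have hind : (1 : ℝ) ≤ indQ T Λ g' := by exact_mod_cast one_le_indQ hΛ hfin g'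
      rw [apply_headQ_eq_div N hNrel (hbar g' (hreach.tail hstep)),
        ← headQ_eq_tailQ_of_step hstep]
      exact (div_le_self (hNpos _).le hind).trans ih
  have hfinite : R.Finite := Set.Finite.of_finite_image
    ((finite_setOf_le_of_summable_inv hNpos hNsum _).subset
      (by rintro _ ⟨g, hg, rfl⟩; exact hle g hg)) hinj
  exact infinite_of_step_closed hΛ hfin hdeg N hNpos hNrel ⟨e, .refl⟩
    (fun _ hg _ hstep => hg.tail hstep) hinj hbar hfinite

include hΛ hfin hdeg hNpos hNrel hNsum in
lemma transGen_of_headQ_eq_tailQ {g g' : EQ T Λ} (h : headQ T Λ g = tailQ T Λ g') :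
    Relation.TransGen (Step T Λ) g g' := by
  by_cases hbar : g' = barQ T Λ g
  · exact hbar ▸ transGen_barQ hΛ hfin hdeg N hNpos hNrel hNsum g
  · exact .single (step_of_ne_barQ hΛ hfin (fun v => Nat.le_of_succ_le (hdeg v)) h hbar)

include hΛ hfin hdeg hNpos hNrel hNsum in
lemma transGen_of_walk {b c : V} (p : T.Walk b c) {g g' : EQ T Λ} (hg : headQ T Λ g = πV Λ b)
    (hg' : tailQ T Λ g' = πV Λ c) : Relation.TransGen (Step T Λ) g g' := by
  induction p generalizing g with
  | nil => exact transGen_of_headQ_eq_tailQ hΛ hfin hdeg N hNpos hNrel hNsum (hg.trans hg'.symm)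
  | @cons b v c hadj _ ih =>
    exact (transGen_of_headQ_eq_tailQ hΛ hfin hdeg N hNpos hNrel hNsum
      (hg.trans (tailQ_πE T Λ ⟨(b, v), hadj⟩).symm)).trans (ih (headQ_πE T Λ _) hg')

include hΛ hfin hdeg hNpos hNrel hNsum in
lemma transGen_step_of_connected (hconn : T.Connected) (e f : EQ T Λ) :
    Relation.TransGen (Step T Λ) e f :=
  have ⟨p⟩ := hconn.preconnected (Quot.out e).1.2 (Quot.out f).1.1
  transGen_of_walk hΛ hfin hdeg N hNpos hNrel hNsum p rfl rfl

end Reach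

lemma IsBiregularTree.three_le_card_neighborSet {T : SimpleGraph V} {d₁ d₂ : ℕ} (hd₁ : 3 ≤ d₁)
    (hd₂ : 3 ≤ d₂) (hT : IsBiregularTree T d₁ d₂) (v : V) : 3 ≤ Nat.card (T.neighborSet v) := by
  obtain ⟨-, -, c, -, hc₁, hc₂⟩ := hT
  cases hv : c v
  · rw [hc₂ v hv]; exact hd₂
  · rw [hc₁ v hv]; exact hd₁

/-- Lemma 3.1. The Markov chain associated to a tree lattice is
irreducible. -/
theorem markov_chain_irreducible {V : Type*} (T : SimpleGraph V) (d₁ d₂ : ℕ)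
    (hd₁ : 3 ≤ d₁) (hd₂ : 3 ≤ d₂) (hT : IsBiregularTree T d₁ d₂)
    (Λ : Subgroup (Equiv.Perm V)) (hΛ : IsTreeLattice T Λ) :
    ∀ e f : EQ T Λ, ∃ n : ℕ, 1 ≤ n ∧ 0 < kerPn T Λ n e f := by
  obtain ⟨haut, hfin, -, N, -, hNpos, hNrel, hNsum⟩ := hΛ
  have hadj : ∀ γ ∈ Λ, ∀ u v, T.Adj (γ u) (γ v) ↔ T.Adj u v := fun γ hγ => (haut γ hγ).1
  have hdeg := hT.three_le_card_neighborSet hd₁ hd₂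
  have : ∀ v, Finite (T.neighborSet v) := fun v => Nat.finite_of_card_ne_zero (by linarith [hdeg v])
  intro e f
  exact exists_kerPn_pos_of_transGen hadj hfin (fun v => Nat.le_of_succ_le (hdeg v))
    (transGen_step_of_connected hadj hfin hdeg N hNpos hNrel hNsum hT.1 e f)

end TreeDyn
end
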